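/- arXiv:math/0108095 — 9 statements merged into one kernel-verified Lean document; each statement's English description precedes it below -/
import Mathlib

section
/- Let K, R be finite dimensional complex vector spaces of the same dimension d and let P(σ) : K → R be a holomorphic family of linear maps defined near σ₀ ∈ ℂ, invertible for σ ≠ σ₀, with P(σ₀) = 0. Then there exist meromorphic germs ψ₁,…,ψ_d at σ₀ with values in K such that each β_j(σ) = P(σ)ψ_j(σ) is holomorphic at σ₀ and β₁(σ₀),…,β_d(σ₀) form a basis of R. Moreover, for any such choice, if u is a K-valued meromorphic germ at σ₀ with P·u holomorphic at σ₀, then u = Σ_{j=1}^d f_j ψ_j for some holomorphic germs f_j. -/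
/-! Write `P(σ)` as a matrix `M(σ)` in bases of `K` and `R`. Its inverse
`(det M(σ))⁻¹ • adj M(σ)` has meromorphic entries, so `ψ_j = P(σ)⁻¹ b_j` works for any basis
`(b_j)` of `R`. Conversely, the matrix of the `β_j(σ)` in the basis `(β_j(σ₀))` is the identity
at `σ₀`, hence invertible with holomorphic inverse near `σ₀`; so `P u = Σ f_j β_j` with
holomorphic `f_j`, and injectivity of `P(σ)` for `σ ≠ σ₀` turns this into `u = Σ f_j ψ_j`. -/

open Filter Topology Matrix

section AnalyticMatrix

variable {𝕜 E : Type*} [NontriviallyNormedField 𝕜] [NormedAddCommGroup E] [NormedSpace 𝕜 E]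
  {n : Type*} [Fintype n] [DecidableEq n] {M : E → Matrix n n 𝕜} {x : E}

theorem Matrix.analyticAt_det (hM : ∀ i j, AnalyticAt 𝕜 (fun y => M y i j) x) :
    AnalyticAt 𝕜 (fun y => (M y).det) x := by
  simp only [Matrix.det_apply']
  exact Finset.analyticAt_fun_sum _ fun p _ =>
    analyticAt_const.mul (Finset.analyticAt_fun_prod _ fun i _ => hM (p i) i)

theorem Matrix.analyticAt_adjugate (hM : ∀ i j, AnalyticAt 𝕜 (fun y => M y i j) x) (i j : n) :
    AnalyticAt 𝕜 (fun y => (M y).adjugate i j) x := by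
  simp only [Matrix.adjugate_apply]
  refine Matrix.analyticAt_det fun k l => ?_
  simp only [Matrix.updateRow_apply]
  split_ifs
  exacts [analyticAt_const, hM k l]

theorem Matrix.analyticAt_inv [CompleteSpace 𝕜] (hM : ∀ i j, AnalyticAt 𝕜 (fun y => M y i j) x)
    (hx : (M x).det ≠ 0) (i j : n) :
    AnalyticAt 𝕜 (fun y => (M y)⁻¹ i j) x := by
  simp only [Matrix.inv_def, Ring.inverse_eq_inv', Matrix.smul_apply, smul_eq_mul]
  exact ((Matrix.analyticAt_det hM).inv hx).mul (Matrix.analyticAt_adjugate hM i j)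

theorem Matrix.meromorphicAt_inv {M : 𝕜 → Matrix n n 𝕜} {z : 𝕜}
    (hM : ∀ i j, AnalyticAt 𝕜 (fun y => M y i j) z) (i j : n) :
    MeromorphicAt (fun y => (M y)⁻¹ i j) z := by
  simp only [Matrix.inv_def, Ring.inverse_eq_inv', Matrix.smul_apply, smul_eq_mul]
  exact (Matrix.analyticAt_det hM).meromorphicAt.inv.mul
    (Matrix.analyticAt_adjugate hM i j).meromorphicAt

end AnalyticMatrix

section MatrixInverse

variable {R M₁ M₂ ι : Type*} [CommRing R] [AddCommGroup M₁] [Module R M₁]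
  [AddCommGroup M₂] [Module R M₂] [Fintype ι] [DecidableEq ι]

theorem LinearMap.apply_toLin_inv_toMatrix (v₁ : Module.Basis ι R M₁) (v₂ : Module.Basis ι R M₂)
    (f : M₁ →ₗ[R] M₂) (hf : IsUnit (LinearMap.toMatrix v₁ v₂ f).det) (x : M₂) :
    f (Matrix.toLin v₂ v₁ (LinearMap.toMatrix v₁ v₂ f)⁻¹ x) = x := by
  have h := Matrix.toLin_mul_apply v₂ v₁ v₂ (LinearMap.toMatrix v₁ v₂ f)
    (LinearMap.toMatrix v₁ v₂ f)⁻¹ x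
  rwa [Matrix.mul_nonsing_inv _ hf, Matrix.toLin_one, Matrix.toLin_toMatrix, eq_comm] at h

theorem Module.Basis.sum_inv_toMatrix_mulVec_repr_smul (e : Module.Basis ι R M₁) (v : ι → M₁)
    (h : IsUnit (e.toMatrix v).det) (x : M₁) :
    ∑ j, ((e.toMatrix v)⁻¹ *ᵥ e.repr x) j • v j = x := by
  set c := (e.toMatrix v)⁻¹ *ᵥ e.repr x
  have hc : e.toMatrix v *ᵥ c = e.repr x := by
    rw [Matrix.mulVec_mulVec, Matrix.mul_nonsing_inv _ h, Matrix.one_mulVec]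
  calc ∑ j, c j • v j = ∑ j, c j • ∑ i, e.toMatrix v i j • e i := by
        simp only [e.sum_toMatrix_smul_self]
    _ = ∑ i, (e.toMatrix v *ᵥ c) i • e i := by
        simp only [Finset.smul_sum, smul_smul, Matrix.mulVec, dotProduct, Finset.sum_smul]
        rw [Finset.sum_comm]
        simp only [mul_comm]
    _ = x := by rw [hc]; exact e.sum_repr x

end MatrixInverse

section AnalyticCoordinates

variable {𝕜 E F G ι : Type*} [NontriviallyNormedField 𝕜] [CompleteSpace 𝕜]
  [NormedAddCommGroup E] [NormedSpace 𝕜 E] [NormedAddCommGroup F] [NormedSpace 𝕜 F]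
  [NormedAddCommGroup G] [NormedSpace 𝕜 G] [FiniteDimensional 𝕜 G] {x : E}

theorem Module.Basis.analyticAt_repr (b : Module.Basis ι 𝕜 G) {g : E → G}
    (hg : AnalyticAt 𝕜 g x) (i : ι) : AnalyticAt 𝕜 (fun y => b.repr (g y) i) x :=
  ((LinearMap.toContinuousLinearMap (b.coord i)).analyticAt _).comp hg

theorem LinearMap.analyticAt_toMatrix_apply [Fintype ι] [DecidableEq ι] {P : E → F →L[𝕜] G}
    (hP : AnalyticAt 𝕜 P x) (bF : Module.Basis ι 𝕜 F) (bG : Module.Basis ι 𝕜 G) (i j : ι) :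
    AnalyticAt 𝕜 (fun y => LinearMap.toMatrix bF bG (P y) i j) x := by
  simp only [LinearMap.toMatrix_apply]
  exact bG.analyticAt_repr (((ContinuousLinearMap.apply 𝕜 G (bF j)).analyticAt _).comp hP) i

end AnalyticCoordinates

section MeromorphicSolutions

variable {𝕜 : Type*} [NontriviallyNormedField 𝕜] [CompleteSpace 𝕜]
  {K R : Type*} [NormedAddCommGroup K] [NormedSpace 𝕜 K]
  [NormedAddCommGroup R] [NormedSpace 𝕜 R] [FiniteDimensional 𝕜 R]
  {ι : Type*} [Fintype ι] [DecidableEq ι]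

theorem exists_meromorphicAt_preimage_basis {σ₀ : 𝕜} {P : 𝕜 → K →L[𝕜] R}
    (hP : AnalyticAt 𝕜 P σ₀) (hinv : ∀ᶠ σ in 𝓝[≠] σ₀, Function.Bijective (P σ))
    (bK : Module.Basis ι 𝕜 K) (bR : Module.Basis ι 𝕜 R) :
    ∃ ψ : ι → 𝕜 → K, (∀ j, MeromorphicAt (ψ j) σ₀) ∧
      ∀ j, ∀ᶠ σ in 𝓝[≠] σ₀, P σ (ψ j σ) = bR j := by
  let M σ := LinearMap.toMatrix bK bR (P σ)
  refine ⟨fun j σ => Matrix.toLin bR bK (M σ)⁻¹ (bR j), fun j => ?_, fun j => ?_⟩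
  · simp only [Matrix.toLin_self]
    exact .fun_sum fun i _ => (Matrix.meromorphicAt_inv
      (LinearMap.analyticAt_toMatrix_apply hP bK bR) i j).smul analyticAt_const.meromorphicAt
  · filter_upwards [hinv] with σ hσ
    exact LinearMap.apply_toLin_inv_toMatrix bK bR _
      (LinearEquiv.isUnit_det (LinearEquiv.ofBijective _ hσ) bK bR) _

variable {E : Type*} [NormedAddCommGroup E] [NormedSpace 𝕜 E]

theorem exists_analyticAt_coeffs {x : E} {β : ι → E → R} (hβ : ∀ j, AnalyticAt 𝕜 (β j) x)
    (hli : LinearIndependent 𝕜 (fun j => β j x)) (hcard : Fintype.card ι = Module.finrank 𝕜 R)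
    {g : E → R} (hg : AnalyticAt 𝕜 g x) :
    ∃ f : ι → E → 𝕜, (∀ j, AnalyticAt 𝕜 (f j) x) ∧ ∀ᶠ y in 𝓝 x, ∑ j, f j y • β j y = g y := by
  let b := Module.Basis.mk hli (hli.span_eq_top_of_card_eq_finrank' hcard).ge
  let N y := b.toMatrix (fun j => β j y)
  have hN : ∀ i j, AnalyticAt 𝕜 (fun y => N y i j) x := fun i j => b.analyticAt_repr (hβ j) i
  have hNx : (N x).det ≠ 0 := by
    have hN1 : N x = 1 :=
      (congrArg b.toMatrix (Module.Basis.coe_mk hli _).symm).trans b.toMatrix_self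
    simp [hN1]
  refine ⟨fun j y => ((N y)⁻¹ *ᵥ b.repr (g y)) j, fun j => ?_, ?_⟩
  · simp only [Matrix.mulVec, dotProduct]
    exact Finset.analyticAt_fun_sum _ fun i _ =>
      (Matrix.analyticAt_inv hN hNx j i).mul (b.analyticAt_repr hg i)
  · filter_upwards [(Matrix.analyticAt_det hN).continuousAt.eventually_ne hNx] with y hy
    exact b.sum_inv_toMatrix_mulVec_repr_smul _ (isUnit_iff_ne_zero.mpr hy) _

end MeromorphicSolutions

theorem stmt_6_general {K R : Type*}
    [NormedAddCommGroup K] [NormedSpace ℂ K] [FiniteDimensional ℂ K]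
    [NormedAddCommGroup R] [NormedSpace ℂ R] [FiniteDimensional ℂ R]
    (d : ℕ)
    (hK : Module.finrank ℂ K = d) (hR : Module.finrank ℂ R = d)
    (σ₀ : ℂ) (P : ℂ → (K →L[ℂ] R)) (hP : AnalyticAt ℂ P σ₀)
    (hinv : ∀ᶠ σ in nhdsWithin σ₀ {σ₀}ᶜ, Function.Bijective (P σ)) :
    (∃ (ψ : Fin d → ℂ → K) (β : Fin d → ℂ → R),
      (∀ j, MeromorphicAt (ψ j) σ₀) ∧
      (∀ j, AnalyticAt ℂ (β j) σ₀) ∧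
      (∀ j, ∀ᶠ σ in nhdsWithin σ₀ {σ₀}ᶜ, β j σ = P σ (ψ j σ)) ∧
      LinearIndependent ℂ (fun j => β j σ₀)) ∧
    (∀ (ψ : Fin d → ℂ → K) (β : Fin d → ℂ → R),
      (∀ j, MeromorphicAt (ψ j) σ₀) →
      (∀ j, AnalyticAt ℂ (β j) σ₀) →
      (∀ j, ∀ᶠ σ in nhdsWithin σ₀ {σ₀}ᶜ, β j σ = P σ (ψ j σ)) →
      LinearIndependent ℂ (fun j => β j σ₀) →
      ∀ u : ℂ → K, MeromorphicAt u σ₀ →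
        (∃ g : ℂ → R, AnalyticAt ℂ g σ₀ ∧
          ∀ᶠ σ in nhdsWithin σ₀ {σ₀}ᶜ, g σ = P σ (u σ)) →
        ∃ f : Fin d → ℂ → ℂ, (∀ j, AnalyticAt ℂ (f j) σ₀) ∧
          ∀ᶠ σ in nhdsWithin σ₀ {σ₀}ᶜ, u σ = ∑ j, f j σ • ψ j σ) := by
  constructor
  · let bR := Module.finBasisOfFinrankEq ℂ R hR
    obtain ⟨ψ, hψ, hPψ⟩ :=
      exists_meromorphicAt_preimage_basis hP hinv (Module.finBasisOfFinrankEq ℂ K hK) bR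
    exact ⟨ψ, fun j _ => bR j, hψ, fun _ => analyticAt_const,
      fun j => (hPψ j).mono fun _ h => h.symm, bR.linearIndependent⟩
  · rintro ψ β - hβ hPψ hli u - ⟨g, hg, hPu⟩
    obtain ⟨f, hf, hfg⟩ := exists_analyticAt_coeffs hβ hli (by simp [hR]) hg
    refine ⟨f, hf, ?_⟩
    filter_upwards [hinv, eventually_all.mpr hPψ, hPu, nhdsWithin_le_nhds hfg]
      with σ hσ hPψσ hPuσ hfgσ
    refine hσ.injective ?_
    simp only [map_sum, map_smul, ← hPψσ, ← hPuσ, hfgσ]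

/-- Structure of meromorphic solutions (Lemma mero1): for a holomorphic family
`P(σ) : K → R` near `σ₀`, invertible for `σ ≠ σ₀` with `P(σ₀) = 0`, there exist
meromorphic germs `ψ₁,…,ψ_d` with `β_j = P·ψ_j` holomorphic and `β_j(σ₀)` a basis of
`R`; and for any such choice, every meromorphic `u` with `P·u` holomorphic can be
written `u = Σ f_j ψ_j` with holomorphic `f_j`. -/
theorem stmt_6 {K R : Type*}
    [NormedAddCommGroup K] [NormedSpace ℂ K] [FiniteDimensional ℂ K]
    [NormedAddCommGroup R] [NormedSpace ℂ R] [FiniteDimensional ℂ R]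
    (d : ℕ) (hd : 0 < d)
    (hK : Module.finrank ℂ K = d) (hR : Module.finrank ℂ R = d)
    (σ₀ : ℂ) (P : ℂ → (K →L[ℂ] R)) (hP : AnalyticAt ℂ P σ₀)
    (hinv : ∀ᶠ σ in nhdsWithin σ₀ {σ₀}ᶜ, Function.Bijective (P σ))
    (hzero : P σ₀ = 0) :
    (∃ (ψ : Fin d → ℂ → K) (β : Fin d → ℂ → R),
      (∀ j, MeromorphicAt (ψ j) σ₀) ∧
      (∀ j, AnalyticAt ℂ (β j) σ₀) ∧
      (∀ j, ∀ᶠ σ in nhdsWithin σ₀ {σ₀}ᶜ, β j σ = P σ (ψ j σ)) ∧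
      LinearIndependent ℂ (fun j => β j σ₀)) ∧
    (∀ (ψ : Fin d → ℂ → K) (β : Fin d → ℂ → R),
      (∀ j, MeromorphicAt (ψ j) σ₀) →
      (∀ j, AnalyticAt ℂ (β j) σ₀) →
      (∀ j, ∀ᶠ σ in nhdsWithin σ₀ {σ₀}ᶜ, β j σ = P σ (ψ j σ)) →
      LinearIndependent ℂ (fun j => β j σ₀) →
      ∀ u : ℂ → K, MeromorphicAt u σ₀ →
        (∃ g : ℂ → R, AnalyticAt ℂ g σ₀ ∧
          ∀ᶠ σ in nhdsWithin σ₀ {σ₀}ᶜ, g σ = P σ (u σ)) →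
        ∃ f : Fin d → ℂ → ℂ, (∀ j, AnalyticAt ℂ (f j) σ₀) ∧
          ∀ᶠ σ in nhdsWithin σ₀ {σ₀}ᶜ, u σ = ∑ j, f j σ • ψ j σ) :=
  stmt_6_general d hK hR σ₀ P hP hinv
end

section
/- Let P(σ) : K → R be holomorphic near σ₀, invertible for σ ≠ σ₀, P(σ₀) = 0, and let ψ₁,…,ψ_d be chosen as in the structure theorem (each P·ψ_j holomorphic with values at σ₀ forming a basis of R, and the leading Laurent coefficients of the ψ_j linearly independent), with pole orders μ_j. Then the images of the elements (σ−σ₀)^ℓ ψ_j, for j = 1,…,d and ℓ = 0,…,μ_j−1, form a basis of the complex vector space Ê_{σ₀} = P^{-1}(Hol_{σ₀}(R)) / Hol_{σ₀}(K). In particular dim_ℂ Ê_{σ₀} = Σ_{j=1}^d μ_j. -/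
/-!
Put `Φⱼ = (σ - σ₀) ^ μⱼ • ψⱼ`; by the Laurent expansion `Φⱼ` is holomorphic with `Φⱼ(σ₀) = cⱼ₀`.

Spanning: if `P u = g` is holomorphic, write `g = ∑ γⱼ βⱼ` with holomorphic `γⱼ` (the `βⱼ(σ)` remain
a basis near `σ₀`, and inverting an analytic family of isomorphisms is analytic). Injectivity of
`P σ` gives `u = ∑ γⱼ ψⱼ`, and the Taylor remainder of `γⱼ` of order `μⱼ` turns `ψⱼ` into `Φⱼ`.

Independence: multiplying a relation by `(σ - σ₀) ^ M`, `M = max μⱼ`, gives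
`∑ pⱼ Φⱼ = O((σ - σ₀) ^ M)` with polynomials `pⱼ` in `σ - σ₀` of degree `< M`. Evaluating at `σ₀`
and using the independence of the `Φⱼ(σ₀)` kills the constant terms; dividing by `σ - σ₀` and
iterating kills the rest.
-/

open Filter Finset Topology
open scoped ContDiff

section

variable {𝕜 E F ι : Type*} [NontriviallyNormedField 𝕜]
  [NormedAddCommGroup E] [NormedSpace 𝕜 E] [NormedAddCommGroup F] [NormedSpace 𝕜 F]

theorem AnalyticAt.clm_apply {A : 𝕜 → E →L[𝕜] F} {g : 𝕜 → E} {x : 𝕜}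
    (hA : AnalyticAt 𝕜 A x) (hg : AnalyticAt 𝕜 g x) : AnalyticAt 𝕜 (fun σ => A σ (g σ)) x :=
  AnalyticAt.comp (g := fun p : (E →L[𝕜] F) × E => p.1 p.2) (f := fun σ => (A σ, g σ))
    ((ContinuousLinearMap.id 𝕜 (E →L[𝕜] F)).analyticAt_bilinear (A x, g x)) (hA.prod hg)

theorem AnalyticAt.dslope {f : 𝕜 → E} {x : 𝕜} (hf : AnalyticAt 𝕜 f x) :
    AnalyticAt 𝕜 (dslope f x) x :=
  let ⟨p, hp⟩ := hf
  ⟨p.fslope, hp.has_fpower_series_dslope_fslope⟩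

theorem AnalyticAt.exists_eq_sum_add_pow_smul {f : 𝕜 → E} {x : 𝕜} (hf : AnalyticAt 𝕜 f x)
    (n : ℕ) : ∃ (a : ℕ → E) (r : 𝕜 → E), AnalyticAt 𝕜 r x ∧
      ∀ σ, f σ = ∑ ℓ ∈ range n, (σ - x) ^ ℓ • a ℓ + (σ - x) ^ n • r σ := by
  induction n with
  | zero => exact ⟨0, f, hf, fun σ => by simp⟩
  | succ n ih =>
    obtain ⟨a, r, hr, hfr⟩ := ih
    refine ⟨Function.update a n (r x), _root_.dslope r x, hr.dslope, fun σ => ?_⟩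
    have hr_eq : r σ = r x + (σ - x) • _root_.dslope r x σ := by rw [sub_smul_dslope]; abel
    have ha : ∑ ℓ ∈ range n, (σ - x) ^ ℓ • Function.update a n (r x) ℓ =
        ∑ ℓ ∈ range n, (σ - x) ^ ℓ • a ℓ :=
      sum_congr rfl fun ℓ hℓ => by rw [Function.update_of_ne (mem_range.1 hℓ).ne]
    rw [hfr σ, sum_range_succ, Function.update_self, ha, hr_eq, smul_add, pow_succ, mul_smul,
      add_assoc]

theorem AnalyticAt.exists_analyticAt_apply_eq [CompleteSpace E] {A : 𝕜 → E →L[𝕜] F} {x : 𝕜}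
    (hA : AnalyticAt 𝕜 A x) {e : E ≃L[𝕜] F} (he : A x = e) {g : 𝕜 → F}
    (hg : AnalyticAt 𝕜 g x) : ∃ γ : 𝕜 → E, AnalyticAt 𝕜 γ x ∧ ∀ᶠ σ in 𝓝 x, A σ (γ σ) = g σ := by
  have hinv : AnalyticAt 𝕜 ContinuousLinearMap.inverse (A x) :=
    he ▸ (contDiffAt_map_inverse (n := ω) e).analyticAt
  refine ⟨fun σ => (A σ).inverse (g σ), (hinv.comp hA).clm_apply hg, ?_⟩
  filter_upwards [hA.continuousAt.preimage_mem_nhds (he ▸ ContinuousLinearEquiv.nhds e)]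
    with σ ⟨e', he'⟩
  simp [← he']

theorem exists_analyticAt_sum_smul_eq [CompleteSpace 𝕜] [Fintype ι] [FiniteDimensional 𝕜 F]
    {β : ι → 𝕜 → F} {x : 𝕜} (hβ : ∀ j, AnalyticAt 𝕜 (β j) x)
    (hind : LinearIndependent 𝕜 fun j => β j x) (hcard : Fintype.card ι = Module.finrank 𝕜 F)
    {g : 𝕜 → F} (hg : AnalyticAt 𝕜 g x) :
    ∃ γ : ι → 𝕜 → 𝕜, (∀ j, AnalyticAt 𝕜 (γ j) x) ∧ ∀ᶠ σ in 𝓝 x, ∑ j, γ j σ • β j σ = g σ := by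
  classical
  let A : 𝕜 → (ι → 𝕜) →L[𝕜] F := fun σ => ∑ j, (ContinuousLinearMap.proj j).smulRight (β j σ)
  have hA : ∀ σ v, A σ v = ∑ j, v j • β j σ := fun σ v => by simp [A]
  have hAa : AnalyticAt 𝕜 A x := Finset.analyticAt_fun_sum _ fun j _ =>
    ((ContinuousLinearMap.smulRightL 𝕜 (ι → 𝕜) F (.proj j)).analyticAt _).comp (hβ j)
  let e := (basisOfLinearIndependentOfCardEqFinrank' _ hind hcard).equivFun.symm
    |>.toContinuousLinearEquiv
  have he : A x = e := ContinuousLinearMap.ext fun v => by simp [hA, e]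
  obtain ⟨γ, hγ, hγg⟩ := hAa.exists_analyticAt_apply_eq he hg
  exact ⟨fun j σ => γ σ j, fun j =>
    ((ContinuousLinearMap.proj j : (ι → 𝕜) →L[𝕜] 𝕜).analyticAt _).comp hγ,
    hγg.mono fun σ h => by rw [← h, hA]⟩

theorem eq_zero_of_sum_pow_smul_eq_pow_smul [Fintype ι] {x : 𝕜} {Φ : ι → 𝕜 → E}
    (hΦ : ∀ j, ContinuousAt (Φ j) x) (hind : LinearIndependent 𝕜 fun j => Φ j x)
    {w : 𝕜 → E} (hw : ContinuousAt w x) (N : ℕ) (b : ι → ℕ → 𝕜)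
    (h : ∀ᶠ σ in 𝓝[≠] x,
      ∑ j, ∑ k ∈ range N, (b j k * (σ - x) ^ k) • Φ j σ = (σ - x) ^ N • w σ) :
    ∀ j, ∀ k < N, b j k = 0 := by
  induction N generalizing b with
  | zero => exact fun j k hk => absurd hk k.not_lt_zero
  | succ N ih =>
    have hb0 : ∀ j, b j 0 = 0 := by
      have hx := ((ContinuousAt.eventuallyEq_nhds_iff_eventuallyEq_nhdsNE
        (by fun_prop) (by fun_prop)).1 h).eq_of_nhds
      simp only [sub_self, sum_range_succ', ne_eq, Nat.add_eq_zero_iff, one_ne_zero, and_false,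
        not_false_eq_true, zero_pow, mul_zero, zero_smul, sum_const_zero, pow_zero, mul_one,
        zero_add] at hx
      exact Fintype.linearIndependent_iff.1 hind _ hx
    have hshift := ih (fun j k => b j (k + 1)) ?_
    · intro j k hk
      cases k with
      | zero => exact hb0 j
      | succ k => exact hshift j k (by omega)
    filter_upwards [h, self_mem_nhdsWithin] with σ hσ hne
    apply smul_right_injective E (sub_ne_zero.2 hne)
    simp only [sum_range_succ', hb0, zero_mul, zero_smul, add_zero] at hσ
    simp only [smul_sum, smul_smul, ← pow_succ', ← hσ]
    congr! 3 with j - k -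
    ring

theorem exists_analyticAt_pow_smul_eq_of_laurent {x : 𝕜} {ψ h : 𝕜 → E} {c : ℕ → E} {μ : ℕ}
    (hμ : 0 < μ) (hh : AnalyticAt 𝕜 h x)
    (hψ : ∀ᶠ σ in 𝓝[≠] x, ψ σ = ∑ ℓ ∈ range μ, (σ - x) ^ ((ℓ : ℤ) - μ) • c ℓ + h σ) :
    ∃ Φ : 𝕜 → E, AnalyticAt 𝕜 Φ x ∧ Φ x = c 0 ∧ ∀ᶠ σ in 𝓝[≠] x, (σ - x) ^ μ • ψ σ = Φ σ := by
  refine ⟨fun σ => ∑ ℓ ∈ range μ, (σ - x) ^ ℓ • c ℓ + (σ - x) ^ μ • h σ, by fun_prop, ?_, ?_⟩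
  · obtain ⟨m, rfl⟩ := Nat.exists_eq_add_one_of_ne_zero hμ.ne'
    simp [sum_range_succ']
  · filter_upwards [hψ, self_mem_nhdsWithin] with σ hσ hne
    rw [hσ, smul_add, smul_sum]
    congr! 2 with ℓ -
    rw [smul_smul, ← zpow_natCast (σ - x) μ, ← zpow_add₀ (sub_ne_zero.2 hne), add_sub_cancel,
      zpow_natCast]

theorem exists_sum_pow_smul_add_analyticAt [Fintype ι] {x : 𝕜} {ψ Φ : ι → 𝕜 → E} {μ : ι → ℕ}
    (hΦ : ∀ j, AnalyticAt 𝕜 (Φ j) x)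
    (hψ : ∀ j, ∀ᶠ σ in 𝓝[≠] x, (σ - x) ^ μ j • ψ j σ = Φ j σ)
    {γ : ι → 𝕜 → 𝕜} (hγ : ∀ j, AnalyticAt 𝕜 (γ j) x) :
    ∃ (a : ι → ℕ → 𝕜) (w : 𝕜 → E), AnalyticAt 𝕜 w x ∧ ∀ᶠ σ in 𝓝[≠] x,
      ∑ j, γ j σ • ψ j σ = ∑ j, ∑ ℓ ∈ range (μ j), (a j ℓ * (σ - x) ^ ℓ) • ψ j σ + w σ := by
  choose a r hr hγr using fun j => (hγ j).exists_eq_sum_add_pow_smul (μ j)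
  refine ⟨a, fun σ => ∑ j, r j σ • Φ j σ, by fun_prop, ?_⟩
  filter_upwards [eventually_all.2 hψ] with σ hψσ
  rw [← sum_add_distrib]
  refine sum_congr rfl fun j _ => ?_
  rw [hγr j σ, add_smul, sum_smul, ← hψσ j, smul_smul]
  simp only [smul_eq_mul, mul_comm]

theorem eq_zero_of_sum_pow_smul_eq_of_continuousAt [Fintype ι] {x : 𝕜} {ψ Φ : ι → 𝕜 → E}
    {μ : ι → ℕ} (hΦ : ∀ j, ContinuousAt (Φ j) x) (hind : LinearIndependent 𝕜 fun j => Φ j x)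
    (hψ : ∀ j, ∀ᶠ σ in 𝓝[≠] x, (σ - x) ^ μ j • ψ j σ = Φ j σ) (a : ι → ℕ → 𝕜)
    {w : 𝕜 → E} (hw : ContinuousAt w x)
    (h : ∀ᶠ σ in 𝓝[≠] x, ∑ j, ∑ ℓ ∈ range (μ j), (a j ℓ * (σ - x) ^ ℓ) • ψ j σ = w σ) :
    ∀ j, ∀ ℓ ∈ range (μ j), a j ℓ = 0 := by
  classical
  set M := univ.sup μ
  have hμM : ∀ j, M - μ j + μ j = M := fun j => Nat.sub_add_cancel (le_sup (mem_univ j))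
  -- the coefficients `a j` shifted by `M - μ j`, so that they multiply `Φ j` instead of `ψ j`
  let b : ι → ℕ → 𝕜 := fun j k => if M - μ j ≤ k then a j (k - (M - μ j)) else 0
  have hb := eq_zero_of_sum_pow_smul_eq_pow_smul hΦ hind hw M b ?_
  · intro j ℓ hℓ
    have := hb j (M - μ j + ℓ) (by have := mem_range.1 hℓ; have := hμM j; omega)
    simpa only [b, if_pos (Nat.le_add_right _ _), Nat.add_sub_cancel_left] using this
  filter_upwards [h, eventually_all.2 hψ] with σ hσ hψσ
  rw [← hσ, smul_sum]
  refine sum_congr rfl fun j _ => ?_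
  have hsplit := sum_range_add (fun k => (b j k * (σ - x) ^ k) • Φ j σ) (M - μ j) (μ j)
  rw [hμM] at hsplit
  have hpow : (σ - x) ^ M = (σ - x) ^ (M - μ j) * (σ - x) ^ μ j := by rw [← pow_add, hμM]
  rw [hsplit, sum_eq_zero fun k hk => by
    simp only [b, if_neg (not_le.2 (mem_range.1 hk)), zero_mul, zero_smul], zero_add, smul_sum]
  refine sum_congr rfl fun ℓ _ => ?_
  simp only [b, if_pos (Nat.le_add_right _ _), Nat.add_sub_cancel_left]
  rw [← hψσ j, smul_smul, smul_smul, hpow]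
  congr 1
  ring

end

theorem stmt_8_general {K R : Type*}
    [NormedAddCommGroup K] [NormedSpace ℂ K] [FiniteDimensional ℂ K]
    [NormedAddCommGroup R] [NormedSpace ℂ R] [FiniteDimensional ℂ R]
    (d : ℕ)
    (hR : Module.finrank ℂ R = d)
    (σ₀ : ℂ) (P : ℂ → (K →L[ℂ] R))
    (hinv : ∀ᶠ σ in nhdsWithin σ₀ {σ₀}ᶜ, Function.Bijective (P σ))
    (ψ : Fin d → ℂ → K) (β : Fin d → ℂ → R) (μ : Fin d → ℕ)
    (c : Fin d → ℕ → K) (h : Fin d → ℂ → K)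
    (hμ : ∀ j, 0 < μ j)
    (hβa : ∀ j, AnalyticAt ℂ (β j) σ₀)
    (hβψ : ∀ j, ∀ᶠ σ in nhdsWithin σ₀ {σ₀}ᶜ, β j σ = P σ (ψ j σ))
    (hβind : LinearIndependent ℂ (fun j => β j σ₀))
    (hha : ∀ j, AnalyticAt ℂ (h j) σ₀)
    (hlaurent : ∀ j, ∀ᶠ σ in nhdsWithin σ₀ {σ₀}ᶜ,
      ψ j σ = (∑ ℓ ∈ Finset.range (μ j),
        ((σ - σ₀) ^ ((ℓ : ℤ) - (μ j : ℤ))) • c j ℓ) + h j σ)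
    (hcind : LinearIndependent ℂ (fun j => c j 0)) :
    (∀ u : ℂ → K, MeromorphicAt u σ₀ →
      (∃ g : ℂ → R, AnalyticAt ℂ g σ₀ ∧
        ∀ᶠ σ in nhdsWithin σ₀ {σ₀}ᶜ, g σ = P σ (u σ)) →
      ∃ (a : Fin d → ℕ → ℂ) (w : ℂ → K), AnalyticAt ℂ w σ₀ ∧
        ∀ᶠ σ in nhdsWithin σ₀ {σ₀}ᶜ,
          u σ = (∑ j, ∑ ℓ ∈ Finset.range (μ j), (a j ℓ * (σ - σ₀) ^ ℓ) • ψ j σ) + w σ) ∧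
    (∀ a : Fin d → ℕ → ℂ,
      (∃ w : ℂ → K, AnalyticAt ℂ w σ₀ ∧
        ∀ᶠ σ in nhdsWithin σ₀ {σ₀}ᶜ,
          (∑ j, ∑ ℓ ∈ Finset.range (μ j), (a j ℓ * (σ - σ₀) ^ ℓ) • ψ j σ) = w σ) →
      ∀ j, ∀ ℓ ∈ Finset.range (μ j), a j ℓ = 0) := by
  choose Φ hΦ hΦc hψΦ using fun j =>
    exists_analyticAt_pow_smul_eq_of_laurent (hμ j) (hha j) (hlaurent j)
  refine ⟨fun u _ ⟨g, hg, hgu⟩ => ?_, fun a ⟨w, hw, hsum⟩ => ?_⟩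
  · obtain ⟨γ, hγ, hγg⟩ := exists_analyticAt_sum_smul_eq hβa hβind (by simp [hR]) hg
    have hu : ∀ᶠ σ in 𝓝[≠] σ₀, u σ = ∑ j, γ j σ • ψ j σ := by
      filter_upwards [hgu, hinv, eventually_all.2 hβψ, hγg.filter_mono nhdsWithin_le_nhds]
        with σ hgσ hPσ hβσ hγσ
      apply hPσ.injective
      simp only [← hgσ, ← hγσ, map_sum, map_smul, hβσ]
    obtain ⟨a, w, hw, hsum⟩ := exists_sum_pow_smul_add_analyticAt hΦ hψΦ hγ
    exact ⟨a, w, hw, hu.and hsum |>.mono fun σ ⟨h₁, h₂⟩ => h₁.trans h₂⟩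
  · have hind : LinearIndependent ℂ fun j => Φ j σ₀ := by simpa only [hΦc] using hcind
    exact eq_zero_of_sum_pow_smul_eq_of_continuousAt (fun j => (hΦ j).continuousAt) hind hψΦ a
      hw.continuousAt hsum

/-- Basis of `Ê_{σ₀} = P^{-1}(Hol_{σ₀}(R))/Hol_{σ₀}(K)` (Lemma mero8): given a system
`ψ₁,…,ψ_d` as in the structure theorem (with `P·ψ_j = β_j` holomorphic, `β_j(σ₀)` a
basis of `R`, Laurent expansions with pole orders `μ_j` and independent leading
coefficients), the elements `(σ−σ₀)^ℓ ψ_j`, `ℓ = 0,…,μ_j−1`, span `P^{-1}(Hol)` modulo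
holomorphic germs, and are linearly independent modulo holomorphic germs; hence
`dim Ê_{σ₀} = Σ μ_j`. -/
theorem stmt_8 {K R : Type*}
    [NormedAddCommGroup K] [NormedSpace ℂ K] [FiniteDimensional ℂ K]
    [NormedAddCommGroup R] [NormedSpace ℂ R] [FiniteDimensional ℂ R]
    (d : ℕ) (hd : 0 < d)
    (hK : Module.finrank ℂ K = d) (hR : Module.finrank ℂ R = d)
    (σ₀ : ℂ) (P : ℂ → (K →L[ℂ] R)) (hP : AnalyticAt ℂ P σ₀)
    (hinv : ∀ᶠ σ in nhdsWithin σ₀ {σ₀}ᶜ, Function.Bijective (P σ))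
    (hzero : P σ₀ = 0)
    (ψ : Fin d → ℂ → K) (β : Fin d → ℂ → R) (μ : Fin d → ℕ)
    (c : Fin d → ℕ → K) (h : Fin d → ℂ → K)
    (hμ : ∀ j, 0 < μ j)
    (hβa : ∀ j, AnalyticAt ℂ (β j) σ₀)
    (hβψ : ∀ j, ∀ᶠ σ in nhdsWithin σ₀ {σ₀}ᶜ, β j σ = P σ (ψ j σ))
    (hβind : LinearIndependent ℂ (fun j => β j σ₀))
    (hha : ∀ j, AnalyticAt ℂ (h j) σ₀)
    (hlaurent : ∀ j, ∀ᶠ σ in nhdsWithin σ₀ {σ₀}ᶜ,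
      ψ j σ = (∑ ℓ ∈ Finset.range (μ j),
        ((σ - σ₀) ^ ((ℓ : ℤ) - (μ j : ℤ))) • c j ℓ) + h j σ)
    (hcind : LinearIndependent ℂ (fun j => c j 0)) :
    (∀ u : ℂ → K, MeromorphicAt u σ₀ →
      (∃ g : ℂ → R, AnalyticAt ℂ g σ₀ ∧
        ∀ᶠ σ in nhdsWithin σ₀ {σ₀}ᶜ, g σ = P σ (u σ)) →
      ∃ (a : Fin d → ℕ → ℂ) (w : ℂ → K), AnalyticAt ℂ w σ₀ ∧
        ∀ᶠ σ in nhdsWithin σ₀ {σ₀}ᶜ,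
          u σ = (∑ j, ∑ ℓ ∈ Finset.range (μ j), (a j ℓ * (σ - σ₀) ^ ℓ) • ψ j σ) + w σ) ∧
    (∀ a : Fin d → ℕ → ℂ,
      (∃ w : ℂ → K, AnalyticAt ℂ w σ₀ ∧
        ∀ᶠ σ in nhdsWithin σ₀ {σ₀}ᶜ,
          (∑ j, ∑ ℓ ∈ Finset.range (μ j), (a j ℓ * (σ - σ₀) ^ ℓ) • ψ j σ) = w σ) →
      ∀ j, ∀ ℓ ∈ Finset.range (μ j), a j ℓ = 0) :=
  stmt_8_general d hR σ₀ P hinv ψ β μ c h hμ hβa hβψ hβind hha hlaurent hcind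
end

section
/- Let K, R be finite dimensional hermitian spaces, P(σ) : K → R holomorphic near σ₀, invertible for σ ≠ σ₀, P(σ₀) = 0, and let P⋆(σ) = P(σ̄)* (pointwise adjoint), which is holomorphic near σ̄₀. For u ∈ P^{-1}(Hol_{σ₀}(K)) and v ∈ (P⋆)^{-1}(Hol_{σ̄₀}(R)), define [u,v]_{P,σ₀} = (1/2π) ∮_{|σ−σ₀|=ε} ⟨P(σ)u(σ), v(σ̄)⟩ dσ. Then [u,v]_{P,σ₀} vanishes when u or v is holomorphic, and the induced pairing Ê_{σ₀} × Ê⋆_{σ̄₀} → ℂ on the quotients by holomorphic germs is a nonsingular (nondegenerate) pairing of finite dimensional vector spaces. -/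
/-!
If `u` is holomorphic, adjointness rewrites the integrand as `⟪P⋆(σ̄) v(σ̄), u(σ)⟫`, and if `v` is
holomorphic it is `⟪v(σ̄), P(σ) u(σ)⟫`; either way it is a holomorphic germ, so Cauchy's theorem
kills the integral.

For nondegeneracy, Cramer's rule gives a meromorphic two-sided inverse `N` of `P`. For holomorphic
`h`, the germs `σ ↦ N(σ) h(σ)` and `τ ↦ N(τ̄)* h(τ)` are admissible test functions, and with
`h = (· - σ₀)ᵐ e` (resp. `(· - σ̄₀)ᵐ e`) the pairing becomes the moment `∮ (σ - σ₀)ᵐ c(σ) dσ` of a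
coordinate `c` of `v(σ̄)` (resp. of `u`), and vanishing of all moments rules out a pole of `c`.
-/

open Filter Topology Metric Complex ComplexConjugate
open scoped InnerProductSpace

theorem tendsto_conj_nhdsNE (a : ℂ) : Tendsto conj (𝓝[≠] a) (𝓝[≠] (conj a)) :=
  (conjCLE.toHomeomorph.map_punctured_nhds_eq a).le

theorem tendsto_conj_nhdsNE_conj (a : ℂ) : Tendsto conj (𝓝[≠] (conj a)) (𝓝[≠] a) := by
  simpa using tendsto_conj_nhdsNE (conj a)

section ConjLinear

variable {A B : Type*} [NormedAddCommGroup A] [NormedSpace ℂ A] [CompleteSpace A]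
  [NormedAddCommGroup B] [NormedSpace ℂ B] [CompleteSpace B] (J : A →L⋆[ℂ] B)

theorem AnalyticAt.comp_conj_of_conjLinear {g : ℂ → A} {b : ℂ} (hg : AnalyticAt ℂ g b) :
    AnalyticAt ℂ (fun z => J (g (conj z))) (conj b) := by
  rw [Complex.analyticAt_iff_eventually_differentiableAt]
  have hconj : Tendsto conj (𝓝 (conj b)) (𝓝 b) := by
    simpa using continuous_conj.tendsto (conj b)
  filter_upwards [hconj.eventually hg.eventually_analyticAt] with z hz
  have hslope : slope (fun z => J (g (conj z))) z = fun w => J (slope g (conj z) (conj w)) := by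
    ext w
    simp only [slope_def_module, map_smulₛₗ, map_sub, map_inv₀, conj_conj]
  refine (hasDerivAt_iff_tendsto_slope (f' := J (deriv g (conj z)))).2 ?_ |>.differentiableAt
  rw [hslope]
  exact (J.continuous.tendsto _).comp
    ((hasDerivAt_iff_tendsto_slope.1 hz.differentiableAt.hasDerivAt).comp (tendsto_conj_nhdsNE z))

theorem MeromorphicAt.comp_conj_of_conjLinear {f : ℂ → A} {b : ℂ} (hf : MeromorphicAt f b) :
    MeromorphicAt (fun z => J (f (conj z))) (conj b) := by
  obtain ⟨n, hn⟩ := hf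
  refine ⟨n, (hn.comp_conj_of_conjLinear J).congr (Eventually.of_forall fun z => ?_)⟩
  simp [map_smulₛₗ]

end ConjLinear

section ClmApply

variable {𝕜 : Type*} [NontriviallyNormedField 𝕜] {E F : Type*} [NormedAddCommGroup E]
  [NormedSpace 𝕜 E] [NormedAddCommGroup F] [NormedSpace 𝕜 F]
  {f : 𝕜 → E →L[𝕜] F} {g : 𝕜 → E} {a : 𝕜}

theorem AnalyticAt.clm_apply_s10 (hf : AnalyticAt 𝕜 f a) (hg : AnalyticAt 𝕜 g a) :
    AnalyticAt 𝕜 (fun z => f z (g z)) a :=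
  AnalyticAt.comp (g := fun p : E × (E →L[𝕜] F) => p.2 p.1)
    ((ContinuousLinearMap.apply 𝕜 F).analyticAt_bilinear (g a, f a)) (hg.prod hf)

theorem MeromorphicAt.clm_apply_s10 (hf : MeromorphicAt f a) (hg : MeromorphicAt g a) :
    MeromorphicAt (fun z => f z (g z)) a := by
  obtain ⟨m, hm⟩ := hf
  obtain ⟨n, hn⟩ := hg
  refine ⟨m + n, (hm.clm_apply_s10 hn).congr (Eventually.of_forall fun z => ?_)⟩
  simp [pow_add, smul_smul, mul_comm]

end ClmApply

section RemovableSingularity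

variable {E : Type*} [NormedAddCommGroup E] [NormedSpace ℂ E]

def HasRemovableSingularityAt (f : ℂ → E) (a : ℂ) : Prop :=
  ∃ g : ℂ → E, AnalyticAt ℂ g a ∧ f =ᶠ[𝓝[≠] a] g

theorem hasRemovableSingularityAt_iff_exists_eventually_eq {f : ℂ → E} {a : ℂ} :
    HasRemovableSingularityAt f a ↔ ∃ g : ℂ → E, AnalyticAt ℂ g a ∧ ∀ᶠ z in 𝓝[≠] a, g z = f z :=
  exists_congr fun _ => and_congr_right' eventuallyEq_comm

theorem eventually_circleIntegral_congr {f g : ℂ → E} {a : ℂ} (h : f =ᶠ[𝓝[≠] a] g) :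
    ∀ᶠ ε in 𝓝[>] (0 : ℝ), (∮ z in C(a, ε), f z) = ∮ z in C(a, ε), g z := by
  obtain ⟨r, hr, hball⟩ := Metric.eventually_nhds_iff_ball.1 (eventually_nhdsWithin_iff.1 h)
  filter_upwards [Ioo_mem_nhdsGT hr] with ε hε
  refine circleIntegral.integral_congr hε.1.le fun z hz => hball z ?_ ?_
  · rw [mem_ball, mem_sphere.1 hz]
    exact hε.2
  · rintro rfl
    simp [hε.1.ne] at hz

variable [CompleteSpace E]

theorem HasRemovableSingularityAt.comp_conj_of_conjLinear {A : Type*} [NormedAddCommGroup A]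
    [NormedSpace ℂ A] [CompleteSpace A] (J : A →L⋆[ℂ] E) {f : ℂ → A} {b : ℂ}
    (hf : HasRemovableSingularityAt f b) :
    HasRemovableSingularityAt (fun z => J (f (conj z))) (conj b) := by
  obtain ⟨g, hg, hfg⟩ := hf
  refine ⟨fun z => J (g (conj z)), hg.comp_conj_of_conjLinear J, ?_⟩
  filter_upwards [tendsto_conj_nhdsNE_conj b |>.eventually hfg] with z hz
  rw [hz]

theorem AnalyticAt.eventually_diffContOnCl_ball {g : ℂ → E} {a : ℂ} (hg : AnalyticAt ℂ g a) :
    ∀ᶠ ε in 𝓝[>] (0 : ℝ), DiffContOnCl ℂ g (ball a ε) := by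
  obtain ⟨r, hr, hball⟩ := Metric.eventually_nhds_iff_ball.1 hg.eventually_analyticAt
  filter_upwards [Ioo_mem_nhdsGT hr] with ε hε
  exact DifferentiableOn.diffContOnCl_ball (fun z hz => (hball z hz).differentiableWithinAt)
    (closedBall_subset_ball hε.2)

theorem HasRemovableSingularityAt.eventually_circleIntegral_eq_zero {f : ℂ → E} {a : ℂ}
    (hf : HasRemovableSingularityAt f a) :
    ∀ᶠ ε in 𝓝[>] (0 : ℝ), (∮ z in C(a, ε), f z) = 0 := by
  obtain ⟨g, hg, hfg⟩ := hf
  filter_upwards [eventually_circleIntegral_congr hfg, hg.eventually_diffContOnCl_ball,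
    self_mem_nhdsWithin] with ε hε hdiff hpos
  rw [hε, hdiff.circleIntegral_eq_zero (le_of_lt hpos)]

/-- At a pole of order `k`, the moment of order `k - 1` is `2πi` times the leading coefficient. -/
theorem MeromorphicAt.hasRemovableSingularityAt_of_moments {f : ℂ → E} {a : ℂ}
    (hf : MeromorphicAt f a)
    (H : ∀ m : ℕ, ∀ᶠ ε in 𝓝[>] (0 : ℝ), (∮ z in C(a, ε), (z - a) ^ m • f z) = 0) :
    HasRemovableSingularityAt f a := by
  by_cases hord : 0 ≤ meromorphicOrderAt f a
  · exact ⟨_, hf.meromorphicOrderAt_nonneg_iff_analyticAt_toMeromorphicNFAt.1 hord,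
      hf.eq_nhdsNE_toMeromorphicNFAt⟩
  exfalso
  obtain ⟨n, hn⟩ := WithTop.ne_top_iff_exists.1 (ne_top_of_lt (not_le.1 hord))
  obtain ⟨g, hg, hga, hfg⟩ := (meromorphicOrderAt_eq_int_iff hf).1 hn.symm
  have hn0 : n < 0 := by exact_mod_cast hn ▸ not_le.1 hord
  have hpole : (fun z => (z - a) ^ (-n - 1).toNat • f z) =ᶠ[𝓝[≠] a] fun z => (z - a)⁻¹ • g z := by
    filter_upwards [hfg, self_mem_nhdsWithin] with z hz hza
    rw [hz, smul_smul, ← zpow_natCast, ← zpow_add₀ (sub_ne_zero.2 hza),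
      Int.toNat_of_nonneg (by omega), show -n - 1 + n = -1 by ring, zpow_neg_one]
  obtain ⟨ε, hε, hcongr, hcauchy, hpos⟩ :=
    (H _ |>.and <| (eventually_circleIntegral_congr hpole).and <|
      hg.eventually_diffContOnCl_ball.and self_mem_nhdsWithin).exists
  rw [hcongr, hcauchy.circleIntegral_sub_inv_smul (mem_ball_self hpos)] at hε
  simp [hga, Real.pi_ne_zero, I_ne_zero] at hε

theorem hasRemovableSingularityAt_of_inner {ι F : Type*} [Fintype ι] [NormedAddCommGroup F]
    [InnerProductSpace ℂ F] (b : OrthonormalBasis ι ℂ F) {f : ℂ → F} {a : ℂ}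
    (h : ∀ i, HasRemovableSingularityAt (fun z => ⟪b i, f z⟫_ℂ) a) :
    HasRemovableSingularityAt f a := by
  choose w hw hfw using h
  refine ⟨fun z => ∑ i, w i z • b i,
    Finset.analyticAt_fun_sum _ fun i _ => (hw i).smul analyticAt_const, ?_⟩
  filter_upwards [eventually_all.2 hfw] with z hz
  rw [← b.sum_repr' (f z)]
  simp only [hz]

end RemovableSingularity

section MeromorphicInverse

variable {𝕜 : Type*} [NontriviallyNormedField 𝕜]

section Matrix

variable {ι : Type*} [Fintype ι] [DecidableEq ι] {A : 𝕜 → Matrix ι ι 𝕜} {a : 𝕜}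

theorem AnalyticAt.matrix_det (hA : ∀ i j, AnalyticAt 𝕜 (fun z => A z i j) a) :
    AnalyticAt 𝕜 (fun z => (A z).det) a := by
  simp_rw [Matrix.det_apply, Units.smul_def, zsmul_eq_mul]
  exact Finset.analyticAt_fun_sum _ fun σ _ =>
    analyticAt_const.mul (Finset.analyticAt_fun_prod _ fun i _ => hA (σ i) i)

theorem AnalyticAt.matrix_adjugate (hA : ∀ i j, AnalyticAt 𝕜 (fun z => A z i j) a) (i j : ι) :
    AnalyticAt 𝕜 (fun z => (A z).adjugate i j) a := by
  simp_rw [Matrix.adjugate_apply]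
  refine AnalyticAt.matrix_det fun k l => ?_
  by_cases hk : k = j
  · simp [hk, analyticAt_const]
  · simpa [hk] using hA k l

theorem MeromorphicAt.matrix_inv (hA : ∀ i j, AnalyticAt 𝕜 (fun z => A z i j) a) (i j : ι) :
    MeromorphicAt (fun z => (A z)⁻¹ i j) a := by
  simp_rw [Matrix.inv_def, Ring.inverse_eq_inv', Matrix.smul_apply, smul_eq_mul]
  exact (AnalyticAt.matrix_det hA).meromorphicAt.inv.mul
    (AnalyticAt.matrix_adjugate hA i j).meromorphicAt

end Matrix

variable [CompleteSpace 𝕜] {E F : Type*} [NormedAddCommGroup E] [NormedSpace 𝕜 E]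
  [FiniteDimensional 𝕜 E] [NormedAddCommGroup F] [NormedSpace 𝕜 F] [FiniteDimensional 𝕜 F]

/-- Cramer's rule: in bases, the inverse is the adjugate matrix divided by the determinant. -/
theorem exists_meromorphicAt_inverse {T : 𝕜 → E →L[𝕜] F} {a : 𝕜} (hT : AnalyticAt 𝕜 T a)
    (hbij : ∀ᶠ z in 𝓝[≠] a, Function.Bijective (T z)) :
    ∃ N : 𝕜 → F →L[𝕜] E, MeromorphicAt N a ∧
      ∀ᶠ z in 𝓝[≠] a, T z ∘L N z = .id 𝕜 F ∧ N z ∘L T z = .id 𝕜 E := by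
  obtain ⟨z₁, hz₁⟩ := hbij.exists
  let bE := Module.finBasis 𝕜 E
  let bF := (Module.finBasis 𝕜 F).reindex
    (finCongr (LinearEquiv.ofBijective (T z₁ : E →ₗ[𝕜] F) hz₁).finrank_eq.symm)
  let M : 𝕜 → Matrix (Fin (Module.finrank 𝕜 E)) (Fin (Module.finrank 𝕜 E)) 𝕜 :=
    fun z => LinearMap.toMatrix bE bF (T z)
  have hM : ∀ i j, AnalyticAt 𝕜 (fun z => M z i j) a := fun i j => by
    simp only [M, LinearMap.toMatrix_apply]
    exact (analyticAt_const (v := LinearMap.toContinuousLinearMap (bF.coord i))).clm_apply_s10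
      (hT.clm_apply_s10 analyticAt_const)
  let Φ := (LinearMap.toContinuousLinearMap : (F →ₗ[𝕜] E) ≃ₗ[𝕜] (F →L[𝕜] E)).toLinearMap ∘ₗ
      (Matrix.toLin bF bE).toLinearMap
  refine ⟨fun z => Φ (M z)⁻¹, ?_, ?_⟩
  · have hΦ : ∀ z, Φ (M z)⁻¹ = ∑ i, ∑ j, (M z)⁻¹ i j • Φ (Matrix.single i j 1) := fun z => by
      conv_lhs => rw [Matrix.matrix_eq_sum_single (M z)⁻¹]
      simp [map_sum, ← map_smul, Matrix.smul_single]
    simp_rw [hΦ]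
    exact MeromorphicAt.fun_sum fun i _ => MeromorphicAt.fun_sum fun j _ =>
      (MeromorphicAt.matrix_inv hM i j).smul (MeromorphicAt.const _ a)
  · filter_upwards [hbij] with z hz
    let e := LinearEquiv.ofBijective (T z : E →ₗ[𝕜] F) hz
    have hdet : IsUnit (M z).det := Matrix.isUnit_det_of_right_inverse
      (B := LinearMap.toMatrix bF bE e.symm) <| by
        rw [← LinearMap.toMatrix_comp bF bE bF, ← LinearMap.toMatrix_id bF]
        congr 1
        ext y
        exact e.apply_symm_apply y
    have hT' : (T z : E →ₗ[𝕜] F) = Matrix.toLin bE bF (M z) :=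
      (Matrix.toLin_toMatrix bE bF _).symm
    constructor <;> apply ContinuousLinearMap.coe_injective
    · simp [Φ, hT', ← Matrix.toLin_mul, Matrix.mul_nonsing_inv _ hdet]
    · simp [Φ, hT', ← Matrix.toLin_mul, Matrix.nonsing_inv_mul _ hdet]

end MeromorphicInverse

section ResiduePairing

theorem HasRemovableSingularityAt.inner_comp_conj {E : Type*} [NormedAddCommGroup E]
    [InnerProductSpace ℂ E] [CompleteSpace E] {f h : ℂ → E} {a : ℂ}
    (hf : HasRemovableSingularityAt f (conj a)) (hh : HasRemovableSingularityAt h a) :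
    HasRemovableSingularityAt (fun z => ⟪f (conj z), h z⟫_ℂ) a := by
  have hf' := hf.comp_conj_of_conjLinear (innerSL ℂ)
  rw [conj_conj] at hf'
  obtain ⟨g, hg, hfg⟩ := hf'
  obtain ⟨w, hw, hhw⟩ := hh
  refine ⟨fun z => g z (w z), hg.clm_apply_s10 hw, ?_⟩
  filter_upwards [hfg, hhw] with z h1 h2
  rw [← h1, ← h2, innerSL_apply_apply]

variable {K R : Type*} [NormedAddCommGroup K] [InnerProductSpace ℂ K]
  [NormedAddCommGroup R] [InnerProductSpace ℂ R]
  {P : ℂ → K →L[ℂ] R} {σ₀ : ℂ}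

open ContinuousLinearMap

theorem hasRemovableSingularityAt_inner_apply [CompleteSpace K] [CompleteSpace R]
    {u : ℂ → K} {v : ℂ → R}
    (hPu : HasRemovableSingularityAt (fun σ => P σ (u σ)) σ₀)
    (hPv : HasRemovableSingularityAt (fun τ => adjoint (P (conj τ)) (v τ)) (conj σ₀))
    (huv : HasRemovableSingularityAt u σ₀ ∨ HasRemovableSingularityAt v (conj σ₀)) :
    HasRemovableSingularityAt (fun σ => ⟪v (conj σ), P σ (u σ)⟫_ℂ) σ₀ := by
  rcases huv with hu | hv
  · simpa [adjoint_inner_left] using hPv.inner_comp_conj hu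
  · exact hv.inner_comp_conj hPu

theorem hasRemovableSingularityAt_of_forall_circleIntegral_inner_eq_zero_left
    [FiniteDimensional ℂ K] [CompleteSpace R] {N : ℂ → R →L[ℂ] K} (hN : MeromorphicAt N σ₀)
    (hNP : ∀ᶠ σ in 𝓝[≠] σ₀, N σ ∘L P σ = .id ℂ K) {u : ℂ → K} (hu : MeromorphicAt u σ₀)
    (H : ∀ v : ℂ → R, MeromorphicAt v (conj σ₀) →
      HasRemovableSingularityAt (fun τ => adjoint (P (conj τ)) (v τ)) (conj σ₀) →
      ∀ᶠ ε in 𝓝[>] (0 : ℝ), (∮ σ in C(σ₀, ε), ⟪v (conj σ), P σ (u σ)⟫_ℂ) = 0) :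
    HasRemovableSingularityAt u σ₀ := by
  refine hasRemovableSingularityAt_of_inner (stdOrthonormalBasis ℂ K) fun i => ?_
  set e := stdOrthonormalBasis ℂ K i
  refine ((MeromorphicAt.const (innerSL ℂ e) σ₀).clm_apply_s10 hu)
    |>.hasRemovableSingularityAt_of_moments fun m => ?_
  let h : ℂ → K := fun τ => (τ - conj σ₀) ^ m • e
  have hh : AnalyticAt ℂ h (conj σ₀) := by fun_prop
  let v : ℂ → R := fun τ => adjoint (N (conj τ)) (h τ)
  have hv : MeromorphicAt v (conj σ₀) := by
    have hN' := hN.comp_conj_of_conjLinear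
      (adjoint : (R →L[ℂ] K) ≃ₗᵢ⋆[ℂ] (K →L[ℂ] R)).toContinuousLinearEquiv.toContinuousLinearMap
    exact hN'.clm_apply_s10 hh.meromorphicAt
  have hPv : HasRemovableSingularityAt (fun τ => adjoint (P (conj τ)) (v τ)) (conj σ₀) := by
    refine ⟨h, hh, ?_⟩
    filter_upwards [tendsto_conj_nhdsNE_conj σ₀ |>.eventually hNP] with τ hτ
    simp only [v]
    rw [← comp_apply, ← adjoint_comp, hτ, adjoint_id, id_apply]
  have hmoment : (fun σ => ⟪v (conj σ), P σ (u σ)⟫_ℂ) =ᶠ[𝓝[≠] σ₀]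
      fun σ => (σ - σ₀) ^ m • innerSL ℂ e (u σ) := by
    filter_upwards [hNP] with σ hσ
    simp only [v, h, conj_conj, adjoint_inner_left]
    rw [← comp_apply (N σ), hσ]
    simp [inner_smul_left]
  filter_upwards [H v hv hPv, eventually_circleIntegral_congr hmoment] with ε h1 h2
  rwa [← h2]

theorem hasRemovableSingularityAt_of_forall_circleIntegral_inner_eq_zero_right
    [FiniteDimensional ℂ R] {N : ℂ → R →L[ℂ] K} (hN : MeromorphicAt N σ₀)
    (hPN : ∀ᶠ σ in 𝓝[≠] σ₀, P σ ∘L N σ = .id ℂ R) {v : ℂ → R} (hv : MeromorphicAt v (conj σ₀))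
    (H : ∀ u : ℂ → K, MeromorphicAt u σ₀ → HasRemovableSingularityAt (fun σ => P σ (u σ)) σ₀ →
      ∀ᶠ ε in 𝓝[>] (0 : ℝ), (∮ σ in C(σ₀, ε), ⟪v (conj σ), P σ (u σ)⟫_ℂ) = 0) :
    HasRemovableSingularityAt v (conj σ₀) := by
  refine hasRemovableSingularityAt_of_inner (stdOrthonormalBasis ℂ R) fun i => ?_
  set e := stdOrthonormalBasis ℂ R i
  have hve : MeromorphicAt (fun σ => ⟪v (conj σ), e⟫_ℂ) σ₀ := by
    simpa using hv.comp_conj_of_conjLinear (innerSLFlip ℂ e)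
  suffices HasRemovableSingularityAt (fun σ => ⟪v (conj σ), e⟫_ℂ) σ₀ by
    simpa [inner_conj_symm] using
      this.comp_conj_of_conjLinear (starL ℂ : ℂ ≃L⋆[ℂ] ℂ).toContinuousLinearMap
  refine hve.hasRemovableSingularityAt_of_moments fun m => ?_
  let h : ℂ → R := fun σ => (σ - σ₀) ^ m • e
  have hh : AnalyticAt ℂ h σ₀ := by fun_prop
  let u : ℂ → K := fun σ => N σ (h σ)
  have hPu : (fun σ => P σ (u σ)) =ᶠ[𝓝[≠] σ₀] h := by
    filter_upwards [hPN] with σ hσ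
    simp only [u]
    rw [← comp_apply, hσ, id_apply]
  have hmoment : (fun σ => ⟪v (conj σ), P σ (u σ)⟫_ℂ) =ᶠ[𝓝[≠] σ₀]
      fun σ => (σ - σ₀) ^ m • ⟪v (conj σ), e⟫_ℂ := by
    filter_upwards [hPu] with σ hσ
    simp [hσ, h]
  filter_upwards [H u (hN.clm_apply_s10 hh.meromorphicAt) ⟨h, hh, hPu⟩,
    eventually_circleIntegral_congr hmoment] with ε h1 h2
  rwa [← h2]

end ResiduePairing

theorem exists_pos_forall_one_div_two_pi_mul_eq_zero_iff {F : ℝ → ℂ} :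
    (∃ ε₀ > (0 : ℝ), ∀ ε : ℝ, 0 < ε → ε < ε₀ → (1 / (2 * Real.pi) : ℂ) * F ε = 0) ↔
      ∀ᶠ ε in 𝓝[>] (0 : ℝ), F ε = 0 := by
  simp [(nhdsGT_basis (0 : ℝ)).eventually_iff, Real.pi_ne_zero]

theorem stmt_10_general {K R : Type*}
    [NormedAddCommGroup K] [InnerProductSpace ℂ K] [FiniteDimensional ℂ K]
    [NormedAddCommGroup R] [InnerProductSpace ℂ R] [FiniteDimensional ℂ R]
    (σ₀ : ℂ) (P : ℂ → (K →L[ℂ] R)) (hP : AnalyticAt ℂ P σ₀)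
    (hinv : ∀ᶠ σ in nhdsWithin σ₀ {σ₀}ᶜ, Function.Bijective (P σ)) :
    (∀ (u : ℂ → K) (v : ℂ → R),
      MeromorphicAt u σ₀ → MeromorphicAt v ((starRingEnd ℂ) σ₀) →
      (∃ g : ℂ → R, AnalyticAt ℂ g σ₀ ∧
        ∀ᶠ σ in nhdsWithin σ₀ {σ₀}ᶜ, g σ = P σ (u σ)) →
      (∃ g : ℂ → K, AnalyticAt ℂ g ((starRingEnd ℂ) σ₀) ∧
        ∀ᶠ σ in nhdsWithin ((starRingEnd ℂ) σ₀) {((starRingEnd ℂ) σ₀)}ᶜ,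
          g σ = ContinuousLinearMap.adjoint (P ((starRingEnd ℂ) σ)) (v σ)) →
      ((∃ w : ℂ → K, AnalyticAt ℂ w σ₀ ∧
          ∀ᶠ σ in nhdsWithin σ₀ {σ₀}ᶜ, u σ = w σ) ∨
       (∃ w : ℂ → R, AnalyticAt ℂ w ((starRingEnd ℂ) σ₀) ∧
          ∀ᶠ σ in nhdsWithin ((starRingEnd ℂ) σ₀) {((starRingEnd ℂ) σ₀)}ᶜ, v σ = w σ)) →
      ∃ ε₀ > (0 : ℝ), ∀ ε : ℝ, 0 < ε → ε < ε₀ →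
        (1 / (2 * Real.pi) : ℂ) *
          (∮ σ in C(σ₀, ε), (inner ℂ (v ((starRingEnd ℂ) σ)) (P σ (u σ)) : ℂ)) = 0) ∧
    (∀ u : ℂ → K, MeromorphicAt u σ₀ →
      (∃ g : ℂ → R, AnalyticAt ℂ g σ₀ ∧
        ∀ᶠ σ in nhdsWithin σ₀ {σ₀}ᶜ, g σ = P σ (u σ)) →
      (∀ v : ℂ → R, MeromorphicAt v ((starRingEnd ℂ) σ₀) →
        (∃ g : ℂ → K, AnalyticAt ℂ g ((starRingEnd ℂ) σ₀) ∧
          ∀ᶠ σ in nhdsWithin ((starRingEnd ℂ) σ₀) {((starRingEnd ℂ) σ₀)}ᶜ,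
            g σ = ContinuousLinearMap.adjoint (P ((starRingEnd ℂ) σ)) (v σ)) →
        ∃ ε₀ > (0 : ℝ), ∀ ε : ℝ, 0 < ε → ε < ε₀ →
          (1 / (2 * Real.pi) : ℂ) *
            (∮ σ in C(σ₀, ε), (inner ℂ (v ((starRingEnd ℂ) σ)) (P σ (u σ)) : ℂ)) = 0) →
      ∃ w : ℂ → K, AnalyticAt ℂ w σ₀ ∧
        ∀ᶠ σ in nhdsWithin σ₀ {σ₀}ᶜ, u σ = w σ) ∧
    (∀ v : ℂ → R, MeromorphicAt v ((starRingEnd ℂ) σ₀) →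
      (∃ g : ℂ → K, AnalyticAt ℂ g ((starRingEnd ℂ) σ₀) ∧
        ∀ᶠ σ in nhdsWithin ((starRingEnd ℂ) σ₀) {((starRingEnd ℂ) σ₀)}ᶜ,
          g σ = ContinuousLinearMap.adjoint (P ((starRingEnd ℂ) σ)) (v σ)) →
      (∀ u : ℂ → K, MeromorphicAt u σ₀ →
        (∃ g : ℂ → R, AnalyticAt ℂ g σ₀ ∧
          ∀ᶠ σ in nhdsWithin σ₀ {σ₀}ᶜ, g σ = P σ (u σ)) →
        ∃ ε₀ > (0 : ℝ), ∀ ε : ℝ, 0 < ε → ε < ε₀ →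
          (1 / (2 * Real.pi) : ℂ) *
            (∮ σ in C(σ₀, ε), (inner ℂ (v ((starRingEnd ℂ) σ)) (P σ (u σ)) : ℂ)) = 0) →
      ∃ w : ℂ → R, AnalyticAt ℂ w ((starRingEnd ℂ) σ₀) ∧
        ∀ᶠ σ in nhdsWithin ((starRingEnd ℂ) σ₀) {((starRingEnd ℂ) σ₀)}ᶜ, v σ = w σ) := by
  obtain ⟨N, hN, hPN⟩ := exists_meromorphicAt_inverse hP hinv
  simp only [← hasRemovableSingularityAt_iff_exists_eventually_eq,
    exists_pos_forall_one_div_two_pi_mul_eq_zero_iff]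
  refine ⟨fun u v _ _ hPu hPv huv => ?_, fun u hu _ H => ?_, fun v hv _ H => ?_⟩
  · exact (hasRemovableSingularityAt_inner_apply hPu hPv huv).eventually_circleIntegral_eq_zero
  · exact hasRemovableSingularityAt_of_forall_circleIntegral_inner_eq_zero_left hN
      (hPN.mono fun _ h => h.2) hu H
  · exact hasRemovableSingularityAt_of_forall_circleIntegral_inner_eq_zero_right hN
      (hPN.mono fun _ h => h.1) hv H

/-- The canonical residue pairing
`[u,v]_{P,σ₀} = (1/2π) ∮_{|σ−σ₀|=ε} ⟨P(σ)u(σ), v(σ̄)⟩ dσ` between meromorphic germs `u`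
with `P·u` holomorphic at `σ₀` and meromorphic germs `v` with `P⋆·v` holomorphic at
`σ̄₀` (where `P⋆(σ) = P(σ̄)*`): it vanishes when `u` or `v` is holomorphic, and the
induced pairing `Ê_{σ₀} × Ê⋆_{σ̄₀} → ℂ` is nondegenerate. -/
theorem stmt_10 {K R : Type*}
    [NormedAddCommGroup K] [InnerProductSpace ℂ K] [FiniteDimensional ℂ K]
    [NormedAddCommGroup R] [InnerProductSpace ℂ R] [FiniteDimensional ℂ R]
    (σ₀ : ℂ) (P : ℂ → (K →L[ℂ] R)) (hP : AnalyticAt ℂ P σ₀)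
    (hinv : ∀ᶠ σ in nhdsWithin σ₀ {σ₀}ᶜ, Function.Bijective (P σ))
    (hzero : P σ₀ = 0) :
    (∀ (u : ℂ → K) (v : ℂ → R),
      MeromorphicAt u σ₀ → MeromorphicAt v ((starRingEnd ℂ) σ₀) →
      (∃ g : ℂ → R, AnalyticAt ℂ g σ₀ ∧
        ∀ᶠ σ in nhdsWithin σ₀ {σ₀}ᶜ, g σ = P σ (u σ)) →
      (∃ g : ℂ → K, AnalyticAt ℂ g ((starRingEnd ℂ) σ₀) ∧
        ∀ᶠ σ in nhdsWithin ((starRingEnd ℂ) σ₀) {((starRingEnd ℂ) σ₀)}ᶜ,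
          g σ = ContinuousLinearMap.adjoint (P ((starRingEnd ℂ) σ)) (v σ)) →
      ((∃ w : ℂ → K, AnalyticAt ℂ w σ₀ ∧
          ∀ᶠ σ in nhdsWithin σ₀ {σ₀}ᶜ, u σ = w σ) ∨
       (∃ w : ℂ → R, AnalyticAt ℂ w ((starRingEnd ℂ) σ₀) ∧
          ∀ᶠ σ in nhdsWithin ((starRingEnd ℂ) σ₀) {((starRingEnd ℂ) σ₀)}ᶜ, v σ = w σ)) →
      ∃ ε₀ > (0 : ℝ), ∀ ε : ℝ, 0 < ε → ε < ε₀ →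
        (1 / (2 * Real.pi) : ℂ) *
          (∮ σ in C(σ₀, ε), (inner ℂ (v ((starRingEnd ℂ) σ)) (P σ (u σ)) : ℂ)) = 0) ∧
    (∀ u : ℂ → K, MeromorphicAt u σ₀ →
      (∃ g : ℂ → R, AnalyticAt ℂ g σ₀ ∧
        ∀ᶠ σ in nhdsWithin σ₀ {σ₀}ᶜ, g σ = P σ (u σ)) →
      (∀ v : ℂ → R, MeromorphicAt v ((starRingEnd ℂ) σ₀) →
        (∃ g : ℂ → K, AnalyticAt ℂ g ((starRingEnd ℂ) σ₀) ∧
          ∀ᶠ σ in nhdsWithin ((starRingEnd ℂ) σ₀) {((starRingEnd ℂ) σ₀)}ᶜ,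
            g σ = ContinuousLinearMap.adjoint (P ((starRingEnd ℂ) σ)) (v σ)) →
        ∃ ε₀ > (0 : ℝ), ∀ ε : ℝ, 0 < ε → ε < ε₀ →
          (1 / (2 * Real.pi) : ℂ) *
            (∮ σ in C(σ₀, ε), (inner ℂ (v ((starRingEnd ℂ) σ)) (P σ (u σ)) : ℂ)) = 0) →
      ∃ w : ℂ → K, AnalyticAt ℂ w σ₀ ∧
        ∀ᶠ σ in nhdsWithin σ₀ {σ₀}ᶜ, u σ = w σ) ∧
    (∀ v : ℂ → R, MeromorphicAt v ((starRingEnd ℂ) σ₀) →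
      (∃ g : ℂ → K, AnalyticAt ℂ g ((starRingEnd ℂ) σ₀) ∧
        ∀ᶠ σ in nhdsWithin ((starRingEnd ℂ) σ₀) {((starRingEnd ℂ) σ₀)}ᶜ,
          g σ = ContinuousLinearMap.adjoint (P ((starRingEnd ℂ) σ)) (v σ)) →
      (∀ u : ℂ → K, MeromorphicAt u σ₀ →
        (∃ g : ℂ → R, AnalyticAt ℂ g σ₀ ∧
          ∀ᶠ σ in nhdsWithin σ₀ {σ₀}ᶜ, g σ = P σ (u σ)) →
        ∃ ε₀ > (0 : ℝ), ∀ ε : ℝ, 0 < ε → ε < ε₀ →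
          (1 / (2 * Real.pi) : ℂ) *
            (∮ σ in C(σ₀, ε), (inner ℂ (v ((starRingEnd ℂ) σ)) (P σ (u σ)) : ℂ)) = 0) →
      ∃ w : ℂ → R, AnalyticAt ℂ w ((starRingEnd ℂ) σ₀) ∧
        ∀ᶠ σ in nhdsWithin ((starRingEnd ℂ) σ₀) {((starRingEnd ℂ) σ₀)}ᶜ, v σ = w σ) :=
  stmt_10_general σ₀ P hP hinv
end

section
/- In the setting of the nonsingular residue pairing: with ψ_j chosen so that P·ψ_j = β_j are holomorphic with independent values at σ₀, and dual elements ψ⋆_j = (σ−σ̄₀)^{−μ_j} β̃_j satisfying P⋆ψ⋆_j = β⋆_j holomorphic, if u = Σ_j Σ_{k=0}^{μ_j−1} (σ−σ₀)^k u_{jk} ψ_j and v = Σ_j Σ_{ℓ=0}^{μ_j−1} (σ−σ̄₀)^ℓ v_{jℓ} ψ⋆_j with constants u_{jk}, v_{jℓ} ∈ ℂ, then [u,v]_{P,σ₀} = i Σ_{j=1}^d Σ_{k=0}^{μ_j−1} u_{jk} · conj(v_{j,μ_j−k−1}). -/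
/-!
On a small punctured disc the identities `P ψ_j = β_j` and the biorthogonality of `β̃_j` against
`β_j` turn the integrand `⟨v(σ̄), P(σ) u(σ)⟩` into the Laurent polynomial
`Σ_j Σ_{k,ℓ} u_{jk} conj(v_{jℓ}) (σ - σ₀)^{k+ℓ-μ_j}`. Integrating over the circle only the
exponent `-1`, i.e. `ℓ = μ_j - k - 1`, survives, with residue `2πi`.
-/

open Complex Finset Topology

theorem circleIntegrable_const_mul_sub_zpow {c : ℂ} {R : ℝ} (hR : R ≠ 0) (A : ℂ) (n : ℤ) :
    CircleIntegrable (fun z => A * (z - c) ^ n) c R := by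
  have h : CircleIntegrable (fun z => (z - c) ^ n) c R :=
    circleIntegrable_sub_zpow_iff.2 (Or.inr (Or.inr (by simp [(abs_pos.2 hR).ne])))
  exact h.fun_continuousOn_mul continuousOn_const

theorem circleIntegral_sub_zpow {c : ℂ} {R : ℝ} (hR : 0 < R) (n : ℤ) :
    (∮ z in C(c, R), (z - c) ^ n) = if n = -1 then 2 * Real.pi * I else 0 := by
  split_ifs with hn
  · simpa [hn] using circleIntegral.integral_sub_inv_of_mem_ball (Metric.mem_ball_self hR)
  · exact circleIntegral.integral_sub_zpow_of_ne hn c c R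

theorem circleIntegral_sum_range_mul_sub_zpow {c : ℂ} {R : ℝ} (hR : 0 < R) {m k : ℕ}
    (hk : k < m) (A : ℕ → ℂ) :
    (∮ z in C(c, R), ∑ ℓ ∈ range m, A ℓ * (z - c) ^ ((k : ℤ) + ℓ - m)) =
      2 * Real.pi * I * A (m - k - 1) := by
  have hexp : ∀ ℓ : ℕ, (k : ℤ) + ℓ - m = -1 ↔ m - k - 1 = ℓ := fun ℓ => by omega
  rw [circleIntegral.integral_fun_sum fun ℓ _ => circleIntegrable_const_mul_sub_zpow hR.ne' _ _]
  simp only [circleIntegral.integral_const_mul, circleIntegral_sub_zpow hR, hexp, mul_ite,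
    mul_zero, sum_ite_eq, mem_range, show m - k - 1 < m by omega, if_true]
  ring

theorem circleIntegral_sum_sum_sum_mul_sub_zpow {ι : Type*} [Fintype ι] {c : ℂ} {R : ℝ}
    (hR : 0 < R) (μ : ι → ℕ) (A : ι → ℕ → ℕ → ℂ) :
    (∮ z in C(c, R), ∑ j, ∑ k ∈ range (μ j), ∑ ℓ ∈ range (μ j),
        A j k ℓ * (z - c) ^ ((k : ℤ) + ℓ - μ j)) =
      2 * Real.pi * I * ∑ j, ∑ k ∈ range (μ j), A j k (μ j - k - 1) := by
  have hint : ∀ (j : ι) (k : ℕ), CircleIntegrable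
      (fun z => ∑ ℓ ∈ range (μ j), A j k ℓ * (z - c) ^ ((k : ℤ) + ℓ - μ j)) c R :=
    fun j k => CircleIntegrable.fun_sum _ fun ℓ _ =>
      circleIntegrable_const_mul_sub_zpow hR.ne' _ _
  rw [circleIntegral.integral_fun_sum fun j _ => CircleIntegrable.fun_sum _ fun k _ => hint j k,
    mul_sum]
  refine sum_congr rfl fun j _ => ?_
  rw [circleIntegral.integral_fun_sum fun k _ => hint j k, mul_sum]
  exact sum_congr rfl fun k hk => circleIntegral_sum_range_mul_sub_zpow hR (mem_range.1 hk) _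

theorem inner_sum_smul_sum_smul_of_biorthogonal {ι E : Type*} [Fintype ι] [DecidableEq ι]
    [NormedAddCommGroup E] [InnerProductSpace ℂ E] {x y : ι → E}
    (hxy : ∀ i j, (inner ℂ (y j) (x i) : ℂ) = if i = j then 1 else 0) (c e : ι → ℂ) :
    (inner ℂ (∑ j, c j • y j) (∑ i, e i • x i) : ℂ) = ∑ j, starRingEnd ℂ (c j) * e j := by
  simp [hxy, mul_comm]

theorem inner_sum_sum_smul_sub_zpow_of_biorthogonal {ι E : Type*} [Fintype ι] [DecidableEq ι]
    [NormedAddCommGroup E] [InnerProductSpace ℂ E] {x y : ι → E}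
    (hxy : ∀ i j, (inner ℂ (y j) (x i) : ℂ) = if i = j then 1 else 0)
    (μ : ι → ℕ) (a b : ι → ℕ → ℂ) {z : ℂ} (hz : z ≠ 0) :
    (inner ℂ (∑ j, ∑ ℓ ∈ range (μ j),
        ((starRingEnd ℂ z) ^ ℓ * b j ℓ) • (((starRingEnd ℂ z) ^ (μ j : ℤ))⁻¹ • y j))
      (∑ j, ∑ k ∈ range (μ j), (z ^ k * a j k) • x j) : ℂ) =
      ∑ j, ∑ k ∈ range (μ j), ∑ ℓ ∈ range (μ j),
        a j k * starRingEnd ℂ (b j ℓ) * z ^ ((k : ℤ) + ℓ - μ j) := by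
  simp only [smul_smul, ← sum_smul]
  rw [inner_sum_smul_sum_smul_of_biorthogonal hxy]
  refine sum_congr rfl fun j _ => ?_
  simp only [map_sum, map_mul, map_pow, map_inv₀, map_zpow₀, conj_conj, sum_mul, mul_sum]
  refine sum_congr rfl fun ℓ _ => sum_congr rfl fun k _ => ?_
  rw [zpow_sub₀ hz, zpow_add₀ hz, zpow_natCast, zpow_natCast, zpow_natCast]
  field_simp

theorem exists_circleIntegral_eq_of_eventuallyEq {E : Type*} [NormedAddCommGroup E]
    [NormedSpace ℂ E] {f g : ℂ → E} {c : ℂ} (h : f =ᶠ[𝓝[≠] c] g) :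
    ∃ ε₀ > (0 : ℝ), ∀ ε : ℝ, 0 < ε → ε < ε₀ →
      (∮ z in C(c, ε), f z) = ∮ z in C(c, ε), g z := by
  obtain ⟨ε₀, hε₀, hsub⟩ := Metric.mem_nhdsWithin_iff.1 h
  refine ⟨ε₀, hε₀, fun ε hε hεε₀ => circleIntegral.integral_congr hε.le fun z hz => hsub ⟨?_, ?_⟩⟩
  · exact Metric.mem_ball.2 ((Metric.mem_sphere.1 hz).trans_lt hεε₀)
  · rintro rfl
    exact hε.ne (by simpa using hz)

theorem stmt_11_general {K R : Type*}
    [NormedAddCommGroup K] [InnerProductSpace ℂ K]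
    [NormedAddCommGroup R] [InnerProductSpace ℂ R]
    (d : ℕ) (σ₀ : ℂ) (P : ℂ → (K →L[ℂ] R))
    (ψ : Fin d → ℂ → K) (β : Fin d → ℂ → R) (βt : Fin d → ℂ → R)
    (ψs : Fin d → ℂ → R) (μ : Fin d → ℕ)
    (hβψ : ∀ j, ∀ᶠ σ in nhdsWithin σ₀ {σ₀}ᶜ, β j σ = P σ (ψ j σ))
    (hdual : ∀ i j, ∀ᶠ σ in nhds σ₀,
      (inner ℂ (βt j ((starRingEnd ℂ) σ)) (β i σ) : ℂ) = if i = j then 1 else 0)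
    (hψs : ∀ j σ, ψs j σ = ((σ - (starRingEnd ℂ) σ₀) ^ ((μ j : ℤ)))⁻¹ • βt j σ)
    (a b : Fin d → ℕ → ℂ) (u : ℂ → K) (v : ℂ → R)
    (hu : ∀ σ, u σ = ∑ j, ∑ k ∈ Finset.range (μ j), ((σ - σ₀) ^ k * a j k) • ψ j σ)
    (hv : ∀ σ, v σ = ∑ j, ∑ ℓ ∈ Finset.range (μ j),
      ((σ - (starRingEnd ℂ) σ₀) ^ ℓ * b j ℓ) • ψs j σ) :
    ∃ ε₀ > (0 : ℝ), ∀ ε : ℝ, 0 < ε → ε < ε₀ →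
      (1 / (2 * Real.pi) : ℂ) *
        (∮ σ in C(σ₀, ε), (inner ℂ (v ((starRingEnd ℂ) σ)) (P σ (u σ)) : ℂ)) =
      Complex.I * ∑ j, ∑ k ∈ Finset.range (μ j),
        a j k * (starRingEnd ℂ) (b j (μ j - k - 1)) := by
  have hlaurent : (fun σ => (inner ℂ (v ((starRingEnd ℂ) σ)) (P σ (u σ)) : ℂ)) =ᶠ[𝓝[≠] σ₀]
      fun σ => ∑ j, ∑ k ∈ range (μ j), ∑ ℓ ∈ range (μ j),
        a j k * starRingEnd ℂ (b j ℓ) * (σ - σ₀) ^ ((k : ℤ) + ℓ - μ j) := by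
    have hdual' := (Filter.eventually_all.2 fun i =>
      Filter.eventually_all.2 (hdual i)).filter_mono (nhdsWithin_le_nhds (s := {σ₀}ᶜ))
    filter_upwards [Filter.eventually_all.2 hβψ, hdual', self_mem_nhdsWithin] with σ hβ hd hσ
    have hPu : P σ (u σ) = ∑ j, ∑ k ∈ range (μ j), ((σ - σ₀) ^ k * a j k) • β j σ := by
      simp only [hu, map_sum, map_smul, hβ]
    rw [hPu, hv]
    simp only [hψs, ← map_sub]
    exact inner_sum_sum_smul_sub_zpow_of_biorthogonal hd μ a b (sub_ne_zero.2 hσ)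
  obtain ⟨ε₀, hε₀, hint⟩ := exists_circleIntegral_eq_of_eventuallyEq hlaurent
  refine ⟨ε₀, hε₀, fun ε hε hεε₀ => ?_⟩
  rw [hint ε hε hεε₀, circleIntegral_sum_sum_sum_mul_sub_zpow hε]
  field_simp

/-- Explicit formula for the residue pairing: with `ψ_j` such that `P·ψ_j = β_j` are
holomorphic, `β̃_j` dual holomorphic germs at `σ̄₀` (`⟨β_i(σ), β̃_j(σ̄)⟩ = δ_{ij}`),
`ψ⋆_j = (σ−σ̄₀)^{−μ_j} β̃_j`, and
`u = Σ_{j,k} (σ−σ₀)^k u_{jk} ψ_j`, `v = Σ_{j,ℓ} (σ−σ̄₀)^ℓ v_{jℓ} ψ⋆_j`, the pairing is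
`[u,v]_{P,σ₀} = i Σ_j Σ_k u_{jk} · conj(v_{j,μ_j−k−1})`. -/
theorem stmt_11 {K R : Type*}
    [NormedAddCommGroup K] [InnerProductSpace ℂ K] [FiniteDimensional ℂ K]
    [NormedAddCommGroup R] [InnerProductSpace ℂ R] [FiniteDimensional ℂ R]
    (d : ℕ) (σ₀ : ℂ) (P : ℂ → (K →L[ℂ] R)) (hP : AnalyticAt ℂ P σ₀)
    (ψ : Fin d → ℂ → K) (β : Fin d → ℂ → R) (βt : Fin d → ℂ → R)
    (ψs : Fin d → ℂ → R) (μ : Fin d → ℕ) (hμ : ∀ j, 0 < μ j)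
    (hβa : ∀ j, AnalyticAt ℂ (β j) σ₀)
    (hβψ : ∀ j, ∀ᶠ σ in nhdsWithin σ₀ {σ₀}ᶜ, β j σ = P σ (ψ j σ))
    (hβta : ∀ j, AnalyticAt ℂ (βt j) ((starRingEnd ℂ) σ₀))
    (hdual : ∀ i j, ∀ᶠ σ in nhds σ₀,
      (inner ℂ (βt j ((starRingEnd ℂ) σ)) (β i σ) : ℂ) = if i = j then 1 else 0)
    (hψs : ∀ j σ, ψs j σ = ((σ - (starRingEnd ℂ) σ₀) ^ ((μ j : ℤ)))⁻¹ • βt j σ)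
    (a b : Fin d → ℕ → ℂ) (u : ℂ → K) (v : ℂ → R)
    (hu : ∀ σ, u σ = ∑ j, ∑ k ∈ Finset.range (μ j), ((σ - σ₀) ^ k * a j k) • ψ j σ)
    (hv : ∀ σ, v σ = ∑ j, ∑ ℓ ∈ Finset.range (μ j),
      ((σ - (starRingEnd ℂ) σ₀) ^ ℓ * b j ℓ) • ψs j σ) :
    ∃ ε₀ > (0 : ℝ), ∀ ε : ℝ, 0 < ε → ε < ε₀ →
      (1 / (2 * Real.pi) : ℂ) *
        (∮ σ in C(σ₀, ε), (inner ℂ (v ((starRingEnd ℂ) σ)) (P σ (u σ)) : ℂ)) =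
      Complex.I * ∑ j, ∑ k ∈ Finset.range (μ j),
        a j k * (starRingEnd ℂ) (b j (μ j - k - 1)) :=
  stmt_11_general d σ₀ P ψ β βt ψs μ hβψ hdual hψs a b u v hu hv
end

section
/- Let P(σ) : K → R be holomorphic near σ₀ ∈ ℂ with P(σ₀) = 0 and invertible for σ ≠ σ₀, and define P⋆(σ) = P(σ̄)*. If ψ_j ∈ 𝔐_{σ₀}(K) have independent leading coefficients, P·ψ_j = β_j holomorphic with β_j(σ₀) independent, and pole orders μ_j, then the partial multiplicities of P⋆ at σ̄₀ equal those of P at σ₀: μ⋆_j = μ_j for all j. -/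
/-!
Pairing `P ψᵢ = βᵢ` with `P⋆ ψ⋆ⱼ = β⋆ⱼ` through the adjoint gives, near `σ₀`,
`⟪ψ⋆ⱼ(σ̄), βᵢ(σ)⟫ = ⟪β⋆ⱼ(σ̄), ψᵢ(σ)⟫`. The left side has a pole of order at most `μ⋆ⱼ` with
leading coefficient `⟪c⋆ⱼ, βᵢ(σ₀)⟫`, the right side one of order at most `μᵢ` with leading
coefficient `⟪β⋆ⱼ(σ̄₀), cᵢ⟫`. Hence `μᵢ < μ⋆ⱼ` forces `c⋆ⱼ ⊥ βᵢ(σ₀)` and `μ⋆ⱼ < μᵢ` forces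
`cᵢ ⊥ β⋆ⱼ(σ̄₀)`. As all four families are bases, for every `t` the `c⋆ⱼ` with `μ⋆ⱼ ≥ t` are
independent and orthogonal to the `βᵢ(σ₀)` with `μᵢ < t`, so `#{μ⋆ ≥ t} ≤ #{μ ≥ t}`, and
symmetrically. Nonincreasing sequences with the same counting function coincide.
-/

open Filter Topology Finset ComplexConjugate Module

local notation "⟪" x ", " y "⟫" => @inner ℂ _ _ x y

section Counting

variable {𝕜 V : Type*} [RCLike 𝕜] [NormedAddCommGroup V] [InnerProductSpace 𝕜 V]
  [FiniteDimensional 𝕜 V]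

theorem card_add_card_le_finrank_of_inner_eq_zero {ι κ : Type*} [Fintype ι] [Fintype κ]
    {a : ι → V} {b : κ → V} (ha : LinearIndependent 𝕜 a) (hb : LinearIndependent 𝕜 b)
    (h : ∀ i j, inner 𝕜 (a i) (b j) = 0) :
    Fintype.card ι + Fintype.card κ ≤ finrank 𝕜 V := by
  have hortho : Submodule.span 𝕜 (Set.range a) ⟂ Submodule.span 𝕜 (Set.range b) :=
    Submodule.isOrtho_span.2 (by rintro _ ⟨i, rfl⟩ _ ⟨j, rfl⟩; exact h i j)
  rw [← finrank_span_eq_card ha, ← finrank_span_eq_card hb,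
    ← (Submodule.span 𝕜 (Set.range b)).finrank_add_finrank_orthogonal, add_comm]
  gcongr
  exact Submodule.finrank_mono hortho.le

theorem card_filter_le_card_filter_of_inner_eq_zero {d : ℕ} (hV : finrank 𝕜 V = d)
    {a b : Fin d → V} (ha : LinearIndependent 𝕜 a) (hb : LinearIndependent 𝕜 b)
    {ν ν' : Fin d → ℕ} (h : ∀ i j, ν i < ν' j → inner 𝕜 (a j) (b i) = 0) (t : ℕ) :
    #{j | t ≤ ν' j} ≤ #{i | t ≤ ν i} := by
  have hcard := card_add_card_le_finrank_of_inner_eq_zero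
    (ha.comp (Subtype.val : {j // t ≤ ν' j} → Fin d) Subtype.val_injective)
    (hb.comp (Subtype.val : {i // ¬t ≤ ν i} → Fin d) Subtype.val_injective)
    (fun j i => h i j (lt_of_lt_of_le (not_le.1 i.2) j.2))
  have hsplit := card_filter_add_card_filter_not (s := univ) (fun i => t ≤ ν i)
  simp only [Fintype.card_subtype, card_univ, Fintype.card_fin, hV] at hcard hsplit
  omega

theorem Antitone.le_apply_iff_lt_card_filter {d : ℕ} {ν : Fin d → ℕ} (hν : Antitone ν)
    {t : ℕ} {j : Fin d} : t ≤ ν j ↔ (j : ℕ) < #{i | t ≤ ν i} := by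
  constructor
  · intro ht
    have hsub : Iic j ⊆ ({i | t ≤ ν i} : Finset (Fin d)) := fun i hi =>
      mem_filter.2 ⟨mem_univ i, ht.trans (hν (mem_Iic.1 hi))⟩
    exact (Fin.card_Iic j ▸ card_le_card hsub : (j : ℕ) + 1 ≤ _)
  · intro hj
    by_contra! hlt
    have hsub : ({i | t ≤ ν i} : Finset (Fin d)) ⊆ Iio j := fun i hi => by
      by_contra hji
      exact ((hν (not_lt.1 (mt mem_Iio.2 hji))).trans_lt hlt).not_ge (mem_filter.1 hi).2
    simpa [Fin.card_Iio] using (card_le_card hsub).trans_lt' hj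

theorem Antitone.le_of_inner_eq_zero {d : ℕ} (hV : finrank 𝕜 V = d)
    {a b : Fin d → V} (ha : LinearIndependent 𝕜 a) (hb : LinearIndependent 𝕜 b)
    {ν ν' : Fin d → ℕ} (hν : Antitone ν) (hν' : Antitone ν')
    (h : ∀ i j, ν i < ν' j → inner 𝕜 (a j) (b i) = 0) : ν' ≤ ν := fun _ =>
  hν.le_apply_iff_lt_card_filter.2 <| (hν'.le_apply_iff_lt_card_filter.1 le_rfl).trans_le
    (card_filter_le_card_filter_of_inner_eq_zero hV ha hb h _)

end Counting

section Laurent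

variable {𝕜 E : Type*} [NontriviallyNormedField 𝕜] [NormedAddCommGroup E] [NormedSpace 𝕜 E]

theorem exists_zpow_smul_of_eq_laurent {σ₀ : 𝕜} {μ : ℕ} (hμ : 0 < μ) {c : ℕ → E}
    {h ψ : 𝕜 → E} (hh : ContinuousAt h σ₀)
    (hψ : ∀ᶠ σ in 𝓝[≠] σ₀, ψ σ = (∑ ℓ ∈ range μ, (σ - σ₀) ^ ((ℓ : ℤ) - (μ : ℤ)) • c ℓ) + h σ) :
    ∃ N : 𝕜 → E, ContinuousAt N σ₀ ∧ N σ₀ = c 0 ∧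
      ∀ᶠ σ in 𝓝[≠] σ₀, ψ σ = (σ - σ₀) ^ (-(μ : ℤ)) • N σ := by
  refine ⟨fun σ => (∑ ℓ ∈ range μ, (σ - σ₀) ^ ℓ • c ℓ) + (σ - σ₀) ^ μ • h σ, by fun_prop,
    by simp [hμ.ne', zero_pow_eq, ite_smul, hμ], ?_⟩
  filter_upwards [hψ, self_mem_nhdsWithin] with σ hσ hne
  have hsub : σ - σ₀ ≠ 0 := sub_ne_zero.2 hne
  simp only [hσ, smul_add, smul_sum, smul_smul, ← zpow_natCast, ← zpow_add₀ hsub,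
    neg_add_cancel, zpow_zero, one_smul, neg_add_eq_sub]

theorem eq_zero_of_zpow_smul_eq {σ₀ : 𝕜} {m n : ℕ} (hnm : n < m) {F G : 𝕜 → E}
    (hF : ContinuousAt F σ₀) (hG : ContinuousAt G σ₀)
    (h : ∀ᶠ σ in 𝓝[≠] σ₀, (σ - σ₀) ^ (-(m : ℤ)) • F σ = (σ - σ₀) ^ (-(n : ℤ)) • G σ) :
    F σ₀ = 0 := by
  have hFG : F =ᶠ[𝓝[≠] σ₀] fun σ => (σ - σ₀) ^ (m - n) • G σ := by
    filter_upwards [h, self_mem_nhdsWithin] with σ hσ hne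
    have hsub : σ - σ₀ ≠ 0 := sub_ne_zero.2 hne
    calc F σ = (σ - σ₀) ^ (m : ℤ) • (σ - σ₀) ^ (-(m : ℤ)) • F σ := by
          rw [smul_smul, ← zpow_add₀ hsub, add_neg_cancel, zpow_zero, one_smul]
      _ = (σ - σ₀) ^ (m - n) • G σ := by
          rw [hσ, smul_smul, ← zpow_add₀ hsub, ← zpow_natCast, Nat.cast_sub hnm.le,
            ← sub_eq_add_neg]
  have hF0 := ((hF.eventuallyEq_nhds_iff_eventuallyEq_nhdsNE (by fun_prop)).1 hFG).eq_of_nhds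
  simpa [zero_pow (Nat.sub_ne_zero_of_lt hnm)] using hF0

end Laurent

theorem eventually_zpow_mul_inner_eq {K R : Type*}
    [NormedAddCommGroup K] [InnerProductSpace ℂ K] [CompleteSpace K]
    [NormedAddCommGroup R] [InnerProductSpace ℂ R] [CompleteSpace R]
    {P : ℂ → K →L[ℂ] R} {σ₀ : ℂ} {ψ N βs : ℂ → K} {β ψs Ns : ℂ → R} {μ μs : ℕ}
    (hβψ : ∀ᶠ σ in 𝓝[≠] σ₀, β σ = P σ (ψ σ))
    (hψ : ∀ᶠ σ in 𝓝[≠] σ₀, ψ σ = (σ - σ₀) ^ (-(μ : ℤ)) • N σ)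
    (hβsψs : ∀ᶠ τ in 𝓝[≠] (conj σ₀), βs τ = ContinuousLinearMap.adjoint (P (conj τ)) (ψs τ))
    (hψs : ∀ᶠ τ in 𝓝[≠] (conj σ₀), ψs τ = (τ - conj σ₀) ^ (-(μs : ℤ)) • Ns τ) :
    ∀ᶠ σ in 𝓝[≠] σ₀,
      (σ - σ₀) ^ (-(μs : ℤ)) * ⟪Ns (conj σ), β σ⟫ = (σ - σ₀) ^ (-(μ : ℤ)) * ⟪βs (conj σ), N σ⟫ := by
  have hconj : Tendsto conj (𝓝[≠] σ₀) (𝓝[≠] (conj σ₀)) :=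
    (Complex.conjLIE.toHomeomorph.map_punctured_nhds_eq σ₀).le
  filter_upwards [hβψ, hψ, hconj.eventually hβsψs, hconj.eventually hψs] with σ hβσ hψσ hβsσ hψsσ
  calc (σ - σ₀) ^ (-(μs : ℤ)) * ⟪Ns (conj σ), β σ⟫ = ⟪ψs (conj σ), β σ⟫ := by
        rw [hψsσ, inner_smul_left, ← map_sub, ← map_zpow₀, Complex.conj_conj]
    _ = ⟪βs (conj σ), ψ σ⟫ := by
        rw [hβσ, ← ContinuousLinearMap.adjoint_inner_left, hβsσ, Complex.conj_conj]
    _ = (σ - σ₀) ^ (-(μ : ℤ)) * ⟪βs (conj σ), N σ⟫ := by rw [hψσ, inner_smul_right]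

theorem stmt_12_general {K R : Type*}
    [NormedAddCommGroup K] [InnerProductSpace ℂ K] [FiniteDimensional ℂ K]
    [NormedAddCommGroup R] [InnerProductSpace ℂ R] [FiniteDimensional ℂ R]
    (d : ℕ)
    (hK : Module.finrank ℂ K = d) (hR : Module.finrank ℂ R = d)
    (σ₀ : ℂ) (P : ℂ → (K →L[ℂ] R))
    -- the system for `P` at `σ₀`
    (ψ : Fin d → ℂ → K) (β : Fin d → ℂ → R) (μ : Fin d → ℕ)
    (c : Fin d → ℕ → K) (h : Fin d → ℂ → K)
    (hμ : ∀ j, 0 < μ j) (hμmono : Antitone μ)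
    (hβa : ∀ j, AnalyticAt ℂ (β j) σ₀)
    (hβψ : ∀ j, ∀ᶠ σ in nhdsWithin σ₀ {σ₀}ᶜ, β j σ = P σ (ψ j σ))
    (hβind : LinearIndependent ℂ (fun j => β j σ₀))
    (hha : ∀ j, AnalyticAt ℂ (h j) σ₀)
    (hlaurent : ∀ j, ∀ᶠ σ in nhdsWithin σ₀ {σ₀}ᶜ,
      ψ j σ = (∑ ℓ ∈ Finset.range (μ j),
        ((σ - σ₀) ^ ((ℓ : ℤ) - (μ j : ℤ))) • c j ℓ) + h j σ)
    (hcind : LinearIndependent ℂ (fun j => c j 0))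
    -- the system for `P⋆` at `σ̄₀`
    (ψs : Fin d → ℂ → R) (βs : Fin d → ℂ → K) (μs : Fin d → ℕ)
    (cs : Fin d → ℕ → R) (hs : Fin d → ℂ → R)
    (hμs : ∀ j, 0 < μs j) (hμsmono : Antitone μs)
    (hβsa : ∀ j, AnalyticAt ℂ (βs j) ((starRingEnd ℂ) σ₀))
    (hβsψ : ∀ j, ∀ᶠ σ in nhdsWithin ((starRingEnd ℂ) σ₀) {((starRingEnd ℂ) σ₀)}ᶜ,
      βs j σ = ContinuousLinearMap.adjoint (P ((starRingEnd ℂ) σ)) (ψs j σ))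
    (hβsind : LinearIndependent ℂ (fun j => βs j ((starRingEnd ℂ) σ₀)))
    (hhsa : ∀ j, AnalyticAt ℂ (hs j) ((starRingEnd ℂ) σ₀))
    (hslaurent : ∀ j, ∀ᶠ σ in nhdsWithin ((starRingEnd ℂ) σ₀) {((starRingEnd ℂ) σ₀)}ᶜ,
      ψs j σ = (∑ ℓ ∈ Finset.range (μs j),
        ((σ - (starRingEnd ℂ) σ₀) ^ ((ℓ : ℤ) - (μs j : ℤ))) • cs j ℓ) + hs j σ)
    (hcsind : LinearIndependent ℂ (fun j => cs j 0)) :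
    ∀ j, μs j = μ j := by
  choose N hNc hN0 hN using fun i =>
    exists_zpow_smul_of_eq_laurent (hμ i) (hha i).continuousAt (hlaurent i)
  choose Ns hNsc hNs0 hNs using fun j =>
    exists_zpow_smul_of_eq_laurent (hμs j) (hhsa j).continuousAt (hslaurent j)
  have hpair : ∀ i j, ∀ᶠ σ in 𝓝[≠] σ₀, (σ - σ₀) ^ (-(μs j : ℤ)) * ⟪Ns j (conj σ), β i σ⟫
      = (σ - σ₀) ^ (-(μ i : ℤ)) * ⟪βs j (conj σ), N i σ⟫ := fun i j =>
    eventually_zpow_mul_inner_eq (hβψ i) (hN i) (hβsψ j) (hNs j)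
  have hNsc' : ∀ j, ContinuousAt (fun σ => Ns j (conj σ)) σ₀ := fun j =>
    (hNsc j).comp Complex.continuous_conj.continuousAt
  have hβsc : ∀ j, ContinuousAt (fun σ => βs j (conj σ)) σ₀ := fun j =>
    (hβsa j).continuousAt.comp Complex.continuous_conj.continuousAt
  intro j
  refine le_antisymm ?_ ?_
  · refine Antitone.le_of_inner_eq_zero hR hcsind hβind hμmono hμsmono (fun i j hij => ?_) j
    rw [← hNs0 j]
    exact eq_zero_of_zpow_smul_eq (F := fun σ => ⟪Ns j (conj σ), β i σ⟫) hij
      ((hNsc' j).inner (hβa i).continuousAt) ((hβsc j).inner (hNc i)) (hpair i j)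
  · refine Antitone.le_of_inner_eq_zero hK hcind hβsind hμsmono hμmono (fun j i hij => ?_) j
    rw [← hN0 i, inner_eq_zero_symm]
    exact eq_zero_of_zpow_smul_eq (F := fun σ => ⟪βs j (conj σ), N i σ⟫) hij
      ((hβsc j).inner (hNc i)) ((hNsc' j).inner (hβa i).continuousAt)
      ((hpair i j).mono fun _ => Eq.symm)

/-- Equality of partial multiplicities: if `ψ₁,…,ψ_d` is a system for `P` at `σ₀`
(independent leading Laurent coefficients, `P·ψ_j = β_j` holomorphic with `β_j(σ₀)`
independent) with nonincreasing pole orders `μ_j`, and `ψ⋆₁,…,ψ⋆_d` is an analogous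
system for `P⋆(σ) = P(σ̄)*` at `σ̄₀` with nonincreasing pole orders `μ⋆_j`, then
`μ⋆_j = μ_j` for all `j`. -/
theorem stmt_12 {K R : Type*}
    [NormedAddCommGroup K] [InnerProductSpace ℂ K] [FiniteDimensional ℂ K]
    [NormedAddCommGroup R] [InnerProductSpace ℂ R] [FiniteDimensional ℂ R]
    (d : ℕ) (hd : 0 < d)
    (hK : Module.finrank ℂ K = d) (hR : Module.finrank ℂ R = d)
    (σ₀ : ℂ) (P : ℂ → (K →L[ℂ] R)) (hP : AnalyticAt ℂ P σ₀)
    (hinv : ∀ᶠ σ in nhdsWithin σ₀ {σ₀}ᶜ, Function.Bijective (P σ))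
    (hzero : P σ₀ = 0)
    -- the system for `P` at `σ₀`
    (ψ : Fin d → ℂ → K) (β : Fin d → ℂ → R) (μ : Fin d → ℕ)
    (c : Fin d → ℕ → K) (h : Fin d → ℂ → K)
    (hμ : ∀ j, 0 < μ j) (hμmono : Antitone μ)
    (hβa : ∀ j, AnalyticAt ℂ (β j) σ₀)
    (hβψ : ∀ j, ∀ᶠ σ in nhdsWithin σ₀ {σ₀}ᶜ, β j σ = P σ (ψ j σ))
    (hβind : LinearIndependent ℂ (fun j => β j σ₀))
    (hha : ∀ j, AnalyticAt ℂ (h j) σ₀)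
    (hlaurent : ∀ j, ∀ᶠ σ in nhdsWithin σ₀ {σ₀}ᶜ,
      ψ j σ = (∑ ℓ ∈ Finset.range (μ j),
        ((σ - σ₀) ^ ((ℓ : ℤ) - (μ j : ℤ))) • c j ℓ) + h j σ)
    (hcind : LinearIndependent ℂ (fun j => c j 0))
    -- the system for `P⋆` at `σ̄₀`
    (ψs : Fin d → ℂ → R) (βs : Fin d → ℂ → K) (μs : Fin d → ℕ)
    (cs : Fin d → ℕ → R) (hs : Fin d → ℂ → R)
    (hμs : ∀ j, 0 < μs j) (hμsmono : Antitone μs)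
    (hβsa : ∀ j, AnalyticAt ℂ (βs j) ((starRingEnd ℂ) σ₀))
    (hβsψ : ∀ j, ∀ᶠ σ in nhdsWithin ((starRingEnd ℂ) σ₀) {((starRingEnd ℂ) σ₀)}ᶜ,
      βs j σ = ContinuousLinearMap.adjoint (P ((starRingEnd ℂ) σ)) (ψs j σ))
    (hβsind : LinearIndependent ℂ (fun j => βs j ((starRingEnd ℂ) σ₀)))
    (hhsa : ∀ j, AnalyticAt ℂ (hs j) ((starRingEnd ℂ) σ₀))
    (hslaurent : ∀ j, ∀ᶠ σ in nhdsWithin ((starRingEnd ℂ) σ₀) {((starRingEnd ℂ) σ₀)}ᶜ,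
      ψs j σ = (∑ ℓ ∈ Finset.range (μs j),
        ((σ - (starRingEnd ℂ) σ₀) ^ ((ℓ : ℤ) - (μs j : ℤ))) • cs j ℓ) + hs j σ)
    (hcsind : LinearIndependent ℂ (fun j => cs j 0)) :
    ∀ j, μs j = μ j :=
  stmt_12_general d hK hR σ₀ P ψ β μ c h hμ hμmono hβa hβψ hβind hha hlaurent hcind ψs βs μs cs hs
    hμs hμsmono hβsa hβsψ hβsind hhsa hslaurent hcsind
end

section
/- Let H be a Hilbert space, Ω ⊆ ℂ open containing a finite set S, and let Ê be a finite dimensional subspace of 𝔐_{Ω,S}(H)/Hol_Ω(H). Then Ê is saturated (invariant under multiplication by σ) if and only if Ê is invariant under multiplication by τ^{iσ} = e^{iσ log τ} for every τ > 0. -/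
/-!
Fix `f ∈ E` and `N` bounding its pole orders on `S`. If an entire `φ` vanishes to order `N` at
every point of `S`, then `φ • f` is holomorphic on `Ω`, hence lies in `E`; so whether `φ • f ∈ E`
depends only on the `N`-jets of `φ` at `S`. Saturation gives all polynomial multipliers, and
dividing `φ` by `∏_{p ∈ S} (z - p) ^ N` leaves a polynomial remainder, so every entire multiplier,
in particular `τ^{iσ}`, preserves `E`. Conversely, the jet of `σ` is the derivative at `t = 0` of
the jet of `e^{iσt}`; the span of the latter jets is finite dimensional, hence closed, so it
contains the jet of `σ`.
-/

open Complex Filter Polynomial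

section PoleOrder

variable {𝕜 F : Type*} [NontriviallyNormedField 𝕜] [NormedAddCommGroup F] [NormedSpace 𝕜 F]
  {f : 𝕜 → F} {p : 𝕜}

theorem AnalyticAt.pow_smul_of_le {m n : ℕ} (h : AnalyticAt 𝕜 (fun z => (z - p) ^ m • f z) p)
    (hmn : m ≤ n) : AnalyticAt 𝕜 (fun z => (z - p) ^ n • f z) p := by
  have heq : (fun z => (z - p) ^ n • f z) = fun z => (z - p) ^ (n - m) • (z - p) ^ m • f z := by
    funext z
    rw [smul_smul, ← pow_add, Nat.sub_add_cancel hmn]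
  rw [heq]
  exact (by fun_prop : AnalyticAt 𝕜 (fun z => (z - p) ^ (n - m)) p).smul h

theorem exists_pow_smul_analyticAt {S : Finset 𝕜} (hf : ∀ p ∈ S, MeromorphicAt f p) :
    ∃ N : ℕ, ∀ p ∈ S, AnalyticAt 𝕜 (fun z => (z - p) ^ N • f z) p := by
  choose m hm using fun p : S => hf p p.2
  exact ⟨Finset.univ.sup m, fun p hp =>
    (hm ⟨p, hp⟩).pow_smul_of_le (Finset.le_sup (Finset.mem_univ _))⟩

theorem AnalyticAt.smul_of_natCast_le_analyticOrderAt {φ : 𝕜 → 𝕜} {N : ℕ}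
    (hφ : AnalyticAt 𝕜 φ p) (hN : N ≤ analyticOrderAt φ p)
    (hf : AnalyticAt 𝕜 (fun z => (z - p) ^ N • f z) p) :
    AnalyticAt 𝕜 (fun z => φ z • f z) p := by
  obtain ⟨g, hg, hφg⟩ := (natCast_le_analyticOrderAt hφ).1 hN
  refine (hg.smul hf).congr ?_
  filter_upwards [hφg] with z hz
  rw [Pi.smul_apply', hz, smul_eq_mul, mul_comm, mul_smul]

end PoleOrder

theorem Differentiable.exists_eq_eval_add_prod_mul {φ : ℂ → ℂ} (hφ : Differentiable ℂ φ)
    (s : Multiset ℂ) : ∃ (P : ℂ[X]) (ψ : ℂ → ℂ), Differentiable ℂ ψ ∧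
      ∀ z, φ z = P.eval z + (s.map (z - ·)).prod * ψ z := by
  induction s using Multiset.induction_on with
  | empty => exact ⟨0, φ, hφ, by simp⟩
  | cons a s ih =>
    obtain ⟨P, ψ, hψ, hφψ⟩ := ih
    refine ⟨P + C (ψ a) * (s.map (X - C ·)).prod, dslope ψ a,
      differentiableOn_univ.1 ((differentiableOn_dslope Filter.univ_mem).2 hψ.differentiableOn),
      fun z => ?_⟩
    have hψz : ψ z = ψ a + (z - a) * dslope ψ a z := by
      rw [← smul_eq_mul, sub_smul_dslope]; ring
    simp only [hφψ z, hψz, eval_add, eval_mul, eval_C, eval_multiset_prod, Multiset.map_map,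
      Function.comp_def, eval_sub, eval_X, Multiset.map_cons, Multiset.prod_cons]
    ring

noncomputable def jet (S : Finset ℂ) (N : ℕ) (φ : ℂ → ℂ) : S → Fin N → ℂ :=
  fun p j => iteratedDeriv j φ p

section Jet

variable {S : Finset ℂ} {N : ℕ} {φ ψ : ℂ → ℂ}

theorem jet_add (hφ : Differentiable ℂ φ) (hψ : Differentiable ℂ ψ) :
    jet S N (φ + ψ) = jet S N φ + jet S N ψ := by
  ext p j
  exact iteratedDeriv_add hφ.contDiff.contDiffAt hψ.contDiff.contDiffAt

theorem jet_sub (hφ : Differentiable ℂ φ) (hψ : Differentiable ℂ ψ) :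
    jet S N (φ - ψ) = jet S N φ - jet S N ψ := by
  ext p j
  exact iteratedDeriv_sub hφ.contDiff.contDiffAt hψ.contDiff.contDiffAt

theorem jet_smul (c : ℂ) (φ : ℂ → ℂ) : jet S N (c • φ) = c • jet S N φ := by
  ext p j
  exact iteratedDeriv_const_smul_field c φ

theorem jet_eq_zero_iff (hφ : Differentiable ℂ φ) :
    jet S N φ = 0 ↔ ∀ p ∈ S, N ≤ analyticOrderAt φ p := by
  simp only [funext_iff, jet, Pi.zero_apply, Subtype.forall, Fin.forall_iff,
    natCast_le_analyticOrderAt_iff_iteratedDeriv_eq_zero (hφ.analyticAt _)]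

theorem hasDerivAt_jet_cexp_mul (S : Finset ℂ) (N : ℕ) :
    HasDerivAt (fun w => jet S N fun σ => exp (w * σ)) (jet S N id) 0 := by
  refine hasDerivAt_pi.2 fun p => hasDerivAt_pi.2 fun j => ?_
  simp only [jet, iteratedDeriv_cexp_const_mul, iteratedDeriv_id]
  refine ((hasDerivAt_pow (j : ℕ) (0 : ℂ)).fun_mul
    ((hasDerivAt_id' (0 : ℂ)).mul_const (p : ℂ)).cexp).congr_deriv ?_
  rcases j with ⟨_ | _ | j, _⟩ <;> simp

end Jet

theorem jet_id_mem_span_jet_cexp (S : Finset ℂ) (N : ℕ) :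
    jet S N id ∈ Submodule.span ℂ
      (jet S N '' Set.range fun t : ℝ => fun σ => exp (I * σ * t)) := by
  set W := Submodule.span ℂ (jet S N '' Set.range fun t : ℝ => fun σ => exp (I * σ * t))
  have hγ : HasDerivAt (fun t : ℝ => jet S N fun σ => exp (I * σ * t)) (I • jet S N id) 0 := by
    have h := (hasDerivAt_jet_cexp_mul S N).scomp_of_eq (0 : ℝ)
      ((hasDerivAt_id (0 : ℝ)).ofReal_comp.const_mul I) (by simp)
    refine (h.congr_deriv (by simp)).congr_of_eventuallyEq (Eventually.of_forall fun t => ?_)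
    simp only [Function.comp_apply, id, mul_right_comm I]
  have hslope (t : ℝ) : slope (fun t : ℝ => jet S N fun σ => exp (I * σ * t)) 0 t ∈ W := by
    rw [slope_def_module]
    exact W.smul_of_tower_mem _ (W.sub_mem (Submodule.subset_span ⟨_, ⟨t, rfl⟩, rfl⟩)
      (Submodule.subset_span ⟨_, ⟨0, rfl⟩, rfl⟩))
  have hI : I • jet S N id ∈ W :=
    (Submodule.closed_of_finiteDimensional W).mem_of_tendsto
      (hasDerivAt_iff_tendsto_slope.1 hγ) (Eventually.of_forall hslope)
  exact (W.smul_mem_iff I_ne_zero).1 hI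

section Multipliers

variable {H : Type*} [NormedAddCommGroup H] [NormedSpace ℂ H] {E : Submodule ℂ (ℂ → H)}
  {f : ℂ → H}

theorem polynomial_eval_smul_mem (hsat : ∀ g ∈ E, (fun σ : ℂ => σ • g σ) ∈ E) (hf : f ∈ E)
    (P : ℂ[X]) : (fun σ => P.eval σ • f σ) ∈ E := by
  induction P using Polynomial.induction_on' with
  | add P Q hP hQ =>
    simp only [eval_add, add_smul]
    exact E.add_mem hP hQ
  | monomial n a =>
    have hpow : (fun σ : ℂ => σ ^ n • f σ) ∈ E := by
      induction n with
      | zero => simpa using hf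
      | succ n ih => simpa only [pow_succ', mul_smul] using hsat _ ih
    simp only [eval_monomial, mul_smul]
    exact E.smul_mem a hpow

variable {Ω : Set ℂ} {S : Finset ℂ} {N : ℕ}

theorem smul_mem_of_natCast_le_analyticOrderAt
    (hhol : ∀ g : ℂ → H, (∀ z ∈ Ω, AnalyticAt ℂ g z) → g ∈ E)
    (hfS : ∀ p ∈ S, AnalyticAt ℂ (fun z => (z - p) ^ N • f z) p)
    (hfΩ : ∀ z ∈ Ω, z ∉ S → AnalyticAt ℂ f z) {φ : ℂ → ℂ} (hφ : ∀ z ∈ Ω, AnalyticAt ℂ φ z)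
    (hφS : ∀ p ∈ S, N ≤ analyticOrderAt φ p) : (fun z => φ z • f z) ∈ E := by
  refine hhol _ fun z hz => ?_
  by_cases hzS : z ∈ S
  · exact (hφ z hz).smul_of_natCast_le_analyticOrderAt (hφS z hzS) (hfS z hzS)
  · exact (hφ z hz).smul (hfΩ z hz hzS)

theorem smul_mem_of_saturated (hhol : ∀ g : ℂ → H, (∀ z ∈ Ω, AnalyticAt ℂ g z) → g ∈ E)
    (hsat : ∀ g ∈ E, (fun σ : ℂ => σ • g σ) ∈ E) (hf : f ∈ E)
    (hfS : ∀ p ∈ S, AnalyticAt ℂ (fun z => (z - p) ^ N • f z) p)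
    (hfΩ : ∀ z ∈ Ω, z ∉ S → AnalyticAt ℂ f z) {φ : ℂ → ℂ} (hφ : Differentiable ℂ φ) :
    (fun z => φ z • f z) ∈ E := by
  obtain ⟨P, ψ, hψ, hφψ⟩ := hφ.exists_eq_eval_add_prod_mul (N • S.val)
  have hQ (z : ℂ) : ((N • S.val).map (z - ·)).prod = ∏ q ∈ S, (z - q) ^ N := by
    rw [Multiset.map_nsmul, Multiset.prod_nsmul, Finset.prod_pow]; rfl
  have hQψ : (fun z => ((∏ q ∈ S, (z - q) ^ N) * ψ z) • f z) ∈ E := by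
    refine smul_mem_of_natCast_le_analyticOrderAt hhol hfS hfΩ
      (fun z _ => by have := hψ.analyticAt z; fun_prop) fun p hp => ?_
    have := hψ.analyticAt p
    refine (natCast_le_analyticOrderAt (by fun_prop)).2
      ⟨fun z => (∏ q ∈ S.erase p, (z - q) ^ N) * ψ z, by fun_prop,
        Eventually.of_forall fun z => ?_⟩
    rw [← Finset.mul_prod_erase S _ hp, smul_eq_mul, mul_assoc]
  convert E.add_mem (polynomial_eval_smul_mem hsat hf P) hQψ using 1
  funext z
  rw [hφψ z, hQ z, Pi.add_apply, add_smul]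

theorem smul_mem_of_jet_mem_span (hhol : ∀ g : ℂ → H, (∀ z ∈ Ω, AnalyticAt ℂ g z) → g ∈ E)
    (hfS : ∀ p ∈ S, AnalyticAt ℂ (fun z => (z - p) ^ N • f z) p)
    (hfΩ : ∀ z ∈ Ω, z ∉ S → AnalyticAt ℂ f z) {T : Set (ℂ → ℂ)}
    (hT : ∀ m ∈ T, Differentiable ℂ m ∧ (fun z => m z • f z) ∈ E)
    {φ : ℂ → ℂ} (hφ : Differentiable ℂ φ) (hjet : jet S N φ ∈ Submodule.span ℂ (jet S N '' T)) :
    (fun z => φ z • f z) ∈ E := by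
  have hspan : ∀ v ∈ Submodule.span ℂ (jet S N '' T),
      ∃ m, Differentiable ℂ m ∧ jet S N m = v ∧ (fun z => m z • f z) ∈ E := by
    intro v hv
    induction hv using Submodule.span_induction with
    | mem v hv =>
      obtain ⟨m, hm, rfl⟩ := hv
      exact ⟨m, (hT m hm).1, rfl, (hT m hm).2⟩
    | zero =>
      refine ⟨0, differentiable_const 0, by ext; simp [jet], ?_⟩
      simp only [Pi.zero_apply, zero_smul]
      exact E.zero_mem
    | add v w _ _ hv hw =>
      obtain ⟨m, hm, rfl, hmf⟩ := hv
      obtain ⟨m', hm', rfl, hm'f⟩ := hw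
      refine ⟨m + m', hm.add hm', jet_add hm hm', ?_⟩
      simp only [Pi.add_apply, add_smul]
      exact E.add_mem hmf hm'f
    | smul c v _ hv =>
      obtain ⟨m, hm, rfl, hmf⟩ := hv
      refine ⟨c • m, hm.const_smul c, jet_smul c m, ?_⟩
      simp only [Pi.smul_apply, smul_eq_mul, mul_smul]
      exact E.smul_mem c hmf
  obtain ⟨m, hm, hmφ, hmf⟩ := hspan _ hjet
  have hdiff : (fun z => (φ - m) z • f z) ∈ E := by
    refine smul_mem_of_natCast_le_analyticOrderAt hhol hfS hfΩ
      (fun z _ => (hφ.sub hm).analyticAt z) ((jet_eq_zero_iff (hφ.sub hm)).1 ?_)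
    rw [jet_sub hφ hm, hmφ, sub_self]
  convert E.add_mem hdiff hmf using 1
  ext z
  simp only [Pi.add_apply, Pi.sub_apply, sub_smul, sub_add_cancel]

end Multipliers

theorem stmt_14_general {H : Type*} [NormedAddCommGroup H] [NormedSpace ℂ H]
    (Ω : Set ℂ) (S : Finset ℂ) (hS : (S : Set ℂ) ⊆ Ω)
    (E : Submodule ℂ (ℂ → H))
    (hmero : ∀ f ∈ E, ∀ z ∈ Ω,
      (z ∈ S → MeromorphicAt f z) ∧ (z ∉ S → AnalyticAt ℂ f z))
    (hhol : ∀ f : ℂ → H, (∀ z ∈ Ω, AnalyticAt ℂ f z) → f ∈ E) :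
    (∀ f ∈ E, (fun σ : ℂ => σ • f σ) ∈ E) ↔
      (∀ τ : ℝ, 0 < τ → ∀ f ∈ E,
        (fun σ : ℂ => Complex.exp (Complex.I * σ * Real.log τ) • f σ) ∈ E) := by
  have hpoles (f) (hf : f ∈ E) :
      ∃ N : ℕ, ∀ p ∈ S, AnalyticAt ℂ (fun z => (z - p) ^ N • f z) p :=
    exists_pow_smul_analyticAt fun p hp => (hmero f hf p (hS hp)).1 hp
  have hfΩ (f) (hf : f ∈ E) : ∀ z ∈ Ω, z ∉ S → AnalyticAt ℂ f z :=
    fun z hz => (hmero f hf z hz).2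
  constructor
  · intro hsat τ _ f hf
    obtain ⟨N, hN⟩ := hpoles f hf
    exact smul_mem_of_saturated hhol hsat hf hN (hfΩ f hf) (by fun_prop)
  · intro hexp f hf
    obtain ⟨N, hN⟩ := hpoles f hf
    refine smul_mem_of_jet_mem_span hhol hN (hfΩ f hf) ?_ differentiable_id
      (jet_id_mem_span_jet_cexp S N)
    rintro _ ⟨t, rfl⟩
    refine ⟨by fun_prop, ?_⟩
    simpa only [Real.log_exp] using hexp (Real.exp t) (Real.exp_pos t) f hf

/-- A finite dimensional subspace `Ê ⊆ 𝔐_{Ω,S}(H)/Hol_Ω(H)` (realized as a submodule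
`E` of functions containing all functions holomorphic on `Ω`, whose elements are
meromorphic on `Ω` with poles in the finite set `S`, and which is finite dimensional
modulo holomorphic functions) is saturated — invariant under multiplication by `σ` —
if and only if it is invariant under multiplication by `τ^{iσ}` for every `τ > 0`. -/
theorem stmt_14 {H : Type*} [NormedAddCommGroup H] [NormedSpace ℂ H]
    (Ω : Set ℂ) (hΩ : IsOpen Ω) (S : Finset ℂ) (hS : (S : Set ℂ) ⊆ Ω)
    (E : Submodule ℂ (ℂ → H))
    (hmero : ∀ f ∈ E, ∀ z ∈ Ω,
      (z ∈ S → MeromorphicAt f z) ∧ (z ∉ S → AnalyticAt ℂ f z))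
    (hhol : ∀ f : ℂ → H, (∀ z ∈ Ω, AnalyticAt ℂ f z) → f ∈ E)
    (hfin : ∃ (n : ℕ) (g : Fin n → (ℂ → H)), ∀ f ∈ E, ∃ c : Fin n → ℂ,
      ∀ z ∈ Ω, AnalyticAt ℂ (fun σ => f σ - ∑ i, c i • g i σ) z) :
    (∀ f ∈ E, (fun σ : ℂ => σ • f σ) ∈ E) ↔
      (∀ τ : ℝ, 0 < τ → ∀ f ∈ E,
        (fun σ : ℂ => Complex.exp (Complex.I * σ * Real.log τ) • f σ) ∈ E) :=
  stmt_14_general Ω S hS E hmero hhol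
end

section
/- Let K be a finite dimensional hermitian space and P(σ) : K → K holomorphic near σ₀ ∈ ℝ, selfadjoint in the sense P(σ̄)* = P(σ), positive in the sense that P(σ) ≥ 0 for real σ ≠ σ₀ near σ₀, with P(σ₀) = 0 and P(σ) invertible for σ ≠ σ₀. Then all partial multiplicities μ_j of P at σ₀ are even. -/
/-!
For real `σ ≠ σ₀` put `A p q σ = ⟪ψ_p σ, P(σ) ψ_q σ⟫`. Selfadjointness makes `A(σ)` hermitian,
positivity makes it positive semidefinite, and the Laurent expansions give
`(σ - σ₀)^{μ_p} A p q σ → M p q := ⟪c_p 0, β_q σ₀⟫`. Scaling the identity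
`A p q = conj (A q p)` in the two possible ways shows `M p q = 0` whenever `μ_q < μ_p`.
If `μ_j` were odd, `(σ - σ₀)^{μ_j}` would change sign at `σ₀`, so for `μ_k = μ_j` the limits of the
scaled positive forms on `span {ψ_j, ψ_k}` would be both `≥ 0` and `≤ 0`, forcing `M j k = 0`.
Then `c_j 0` and the `c_p 0` with `μ_p > μ_j` would all be orthogonal to the `β_k σ₀` with
`μ_k ≤ μ_j`: one independent vector more than `dim K` allows.
-/

open Filter Topology Finset Module ComplexConjugate
open scoped InnerProductSpace

theorem eq_zero_of_tendsto_odd_pow_mul {g : ℝ → ℝ} {x₀ L : ℝ} {m : ℕ} (hm : Odd m)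
    (hg : ∀ᶠ x in 𝓝[≠] x₀, 0 ≤ g x)
    (hL : Tendsto (fun x => (x - x₀) ^ m * g x) (𝓝[≠] x₀) (𝓝 L)) : L = 0 := by
  refine le_antisymm ?_ ?_
  · refine le_of_tendsto (hL.mono_left (nhdsLT_le_nhdsNE _)) ?_
    filter_upwards [hg.filter_mono (nhdsLT_le_nhdsNE _), self_mem_nhdsWithin] with x hgx hx
    exact mul_nonpos_of_nonpos_of_nonneg (hm.pow_neg (sub_neg.2 hx)).le hgx
  · refine ge_of_tendsto (hL.mono_left (nhdsGT_le_nhdsNE _)) ?_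
    filter_upwards [hg.filter_mono (nhdsGT_le_nhdsNE _), self_mem_nhdsWithin] with x hgx hx
    exact mul_nonneg (pow_nonneg (sub_pos.2 hx).le _) hgx

theorem eq_zero_of_forall_re_eq_zero {a b d : ℂ}
    (h : ∀ z : ℂ, (a + z * b + conj z * conj b + z * conj z * d).re = 0) : b = 0 := by
  have h₁ := h (conj b)
  have h₂ := h (-conj b)
  simp only [map_neg, Complex.conj_conj, neg_mul, mul_neg, neg_neg, Complex.mul_conj,
    ← Complex.normSq_eq_conj_mul_self, Complex.add_re, Complex.neg_re, Complex.re_ofReal_mul,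
    Complex.ofReal_re] at h₁ h₂
  exact Complex.normSq_eq_zero.1 (by linarith)

theorem tendsto_ofReal_nhdsNE (x : ℝ) : Tendsto ((↑) : ℝ → ℂ) (𝓝[≠] x) (𝓝[≠] (x : ℂ)) :=
  Complex.continuous_ofReal.continuousWithinAt.tendsto_nhdsWithin fun _ hy => by simpa using hy

theorem tendsto_sub_pow_smul_of_eventuallyEq_laurent {E : Type*} [NormedAddCommGroup E]
    [NormedSpace ℂ E] {z₀ : ℂ} {μ : ℕ} (hμ : 0 < μ) {c : ℕ → E} {h ψ : ℂ → E}
    (hh : ContinuousAt h z₀)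
    (hψ : ∀ᶠ z in 𝓝[≠] z₀, ψ z = ∑ ℓ ∈ range μ, (z - z₀) ^ ((ℓ : ℤ) - μ) • c ℓ + h z) :
    Tendsto (fun z => (z - z₀) ^ μ • ψ z) (𝓝[≠] z₀) (𝓝 (c 0)) := by
  set F : ℂ → E := fun z => ∑ ℓ ∈ range μ, (z - z₀) ^ ℓ • c ℓ + (z - z₀) ^ μ • h z
  have hF : ContinuousAt F z₀ := by fun_prop
  have hF₀ : F z₀ = c 0 := by
    obtain ⟨n, rfl⟩ := Nat.exists_eq_add_of_lt hμ
    simp [F, sum_range_succ']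
  have hψF : (fun z => (z - z₀) ^ μ • ψ z) =ᶠ[𝓝[≠] z₀] F := by
    filter_upwards [hψ, self_mem_nhdsWithin] with z hz hne
    rw [hz, smul_add, smul_sum]
    congr 1
    refine sum_congr rfl fun ℓ _ => ?_
    rw [smul_smul, ← zpow_natCast, ← zpow_add₀ (sub_ne_zero.2 hne), add_sub_cancel, zpow_natCast]
  exact hF₀ ▸ (hF.tendsto.mono_left nhdsWithin_le_nhds).congr' hψF.symm

theorem tendsto_sub_pow_mul_inner_of_eventuallyEq_laurent {K : Type*} [NormedAddCommGroup K]
    [InnerProductSpace ℂ K] {x₀ : ℝ} {μ : ℕ} (hμ : 0 < μ) {c : ℕ → K} {h ψ β : ℂ → K}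
    (hh : ContinuousAt h x₀)
    (hψ : ∀ᶠ z in 𝓝[≠] (x₀ : ℂ), ψ z = ∑ ℓ ∈ range μ, (z - x₀) ^ ((ℓ : ℤ) - μ) • c ℓ + h z)
    (hβ : ContinuousAt β x₀) :
    Tendsto (fun x : ℝ => ((x - x₀ : ℝ) : ℂ) ^ μ * ⟪ψ x, β x⟫_ℂ) (𝓝[≠] x₀) (𝓝 ⟪c 0, β x₀⟫_ℂ) := by
  have hreal := tendsto_ofReal_nhdsNE x₀
  have hψ' := (tendsto_sub_pow_smul_of_eventuallyEq_laurent hμ hh hψ).comp hreal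
  have hβ' := hβ.tendsto.comp (hreal.mono_right nhdsWithin_le_nhds)
  refine (hψ'.inner hβ').congr fun x => ?_
  simp [inner_smul_left]

theorem eventually_isSelfAdjoint_ofReal {K : Type*} [NormedAddCommGroup K]
    [InnerProductSpace ℂ K] [CompleteSpace K] {P : ℂ → K →L[ℂ] K} {x₀ : ℝ}
    (hsa : ∀ᶠ z in 𝓝 (x₀ : ℂ), ContinuousLinearMap.adjoint (P (conj z)) = P z) :
    ∀ᶠ x : ℝ in 𝓝 x₀, IsSelfAdjoint (P x) :=
  ((Complex.continuous_ofReal.tendsto x₀).eventually hsa).mono fun x hx => by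
    rwa [Complex.conj_ofReal, ← ContinuousLinearMap.star_eq_adjoint] at hx

section ScaledLimit

variable {ι : Type*} {σ₀ : ℝ} {A : ι → ι → ℝ → ℂ} {M : ι → ι → ℂ} {μ : ι → ℕ}

theorem scaledLimit_eq_zero_of_lt (hA : ∀ p q, ∀ᶠ σ in 𝓝[≠] σ₀, A p q σ = conj (A q p σ))
    (hM : ∀ p q, Tendsto (fun σ => ((σ - σ₀ : ℝ) : ℂ) ^ μ p * A p q σ) (𝓝[≠] σ₀) (𝓝 (M p q)))
    {p q : ι} (hqp : μ q < μ p) : M p q = 0 := by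
  have hpow : Tendsto (fun σ : ℝ => ((σ - σ₀ : ℝ) : ℂ) ^ (μ p - μ q)) (𝓝[≠] σ₀) (𝓝 0) := by
    have : Continuous fun σ : ℝ => ((σ - σ₀ : ℝ) : ℂ) ^ (μ p - μ q) := by fun_prop
    simpa [zero_pow (Nat.sub_ne_zero_of_lt hqp)] using
      (this.tendsto σ₀).mono_left nhdsWithin_le_nhds
  have hlim := hpow.mul ((Complex.continuous_conj.tendsto _).comp (hM q p))
  rw [zero_mul] at hlim
  refine tendsto_nhds_unique (hM p q) (hlim.congr' ?_)
  filter_upwards [hA p q] with σ hσ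
  rw [Function.comp_apply, map_mul, map_pow, Complex.conj_ofReal, ← hσ, ← mul_assoc, ← pow_add,
    Nat.sub_add_cancel hqp.le]

theorem scaledLimit_conj_of_eq (hA : ∀ p q, ∀ᶠ σ in 𝓝[≠] σ₀, A p q σ = conj (A q p σ))
    (hM : ∀ p q, Tendsto (fun σ => ((σ - σ₀ : ℝ) : ℂ) ^ μ p * A p q σ) (𝓝[≠] σ₀) (𝓝 (M p q)))
    {p q : ι} (hpq : μ p = μ q) : M q p = conj (M p q) := by
  refine tendsto_nhds_unique (hM q p)
    (((Complex.continuous_conj.tendsto _).comp (hM p q)).congr' ?_)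
  filter_upwards [hA q p] with σ hσ
  rw [Function.comp_apply, map_mul, map_pow, Complex.conj_ofReal, hσ, hpq]

theorem scaledLimit_eq_zero_of_odd (hA : ∀ p q, ∀ᶠ σ in 𝓝[≠] σ₀, A p q σ = conj (A q p σ))
    (hpos : ∀ p q (z : ℂ), ∀ᶠ σ in 𝓝[≠] σ₀,
      0 ≤ (A p p σ + z * A p q σ + conj z * A q p σ + z * conj z * A q q σ).re)
    (hM : ∀ p q, Tendsto (fun σ => ((σ - σ₀ : ℝ) : ℂ) ^ μ p * A p q σ) (𝓝[≠] σ₀) (𝓝 (M p q)))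
    {p q : ι} (hpq : μ p = μ q) (hodd : Odd (μ p)) : M p q = 0 := by
  refine eq_zero_of_forall_re_eq_zero (a := M p p) (d := M q q) fun z => ?_
  rw [← scaledLimit_conj_of_eq hA hM hpq]
  refine eq_zero_of_tendsto_odd_pow_mul hodd (hpos p q z) ?_
  have hlim := (((hM p p).add ((hM p q).const_mul z)).add ((hM q p).const_mul (conj z))).add
    ((hM q q).const_mul (z * conj z))
  refine ((Complex.continuous_re.tendsto _).comp hlim).congr fun σ => ?_
  simp only [Function.comp_apply, hpq, ← Complex.re_ofReal_mul, Complex.ofReal_pow]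
  ring_nf

end ScaledLimit

section Orthogonal

variable {𝕜 K : Type*} [RCLike 𝕜] [NormedAddCommGroup K] [InnerProductSpace 𝕜 K]
  [FiniteDimensional 𝕜 K]

theorem card_add_card_le_finrank_of_inner_eq_zero_s15 {α β : Type*} [Fintype α] [Fintype β]
    {u : α → K} {v : β → K} (hu : LinearIndependent 𝕜 u) (hv : LinearIndependent 𝕜 v)
    (huv : ∀ a b, ⟪u a, v b⟫_𝕜 = 0) : Fintype.card α + Fintype.card β ≤ finrank 𝕜 K := by
  have hdisj : Disjoint (Submodule.span 𝕜 (Set.range u)) (Submodule.span 𝕜 (Set.range v)) :=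
    (Submodule.isOrtho_span.2 (by rintro _ ⟨a, rfl⟩ _ ⟨b, rfl⟩; exact huv a b)).disjoint
  simpa using (hu.sum_type hv hdisj).fintype_card_le_finrank

theorem exists_eq_and_inner_ne_zero_of_triangular {ι α : Type*} [Fintype ι] [LinearOrder α]
    {u v : ι → K} (hu : LinearIndependent 𝕜 u) (hv : LinearIndependent 𝕜 v)
    (hcard : finrank 𝕜 K ≤ Fintype.card ι) (μ : ι → α)
    (htri : ∀ p q, μ q < μ p → ⟪u p, v q⟫_𝕜 = 0) (j : ι) :
    ∃ k, μ k = μ j ∧ ⟪u j, v k⟫_𝕜 ≠ 0 := by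
  classical
  by_contra! hj
  set S := univ.filter fun q => μ q ≤ μ j
  set G := univ.filter fun p => μ j < μ p
  set T := insert j G
  have horth : ∀ p ∈ T, ∀ q ∈ S, ⟪u p, v q⟫_𝕜 = 0 := by
    intro p hp q hq
    simp only [S, T, G, mem_insert, mem_filter, mem_univ, true_and] at hp hq
    rcases hp with rfl | hp
    · rcases hq.lt_or_eq with hq | hq
      exacts [htri _ _ hq, hj q hq]
    · exact htri _ _ (hq.trans_lt hp)
  have hle := card_add_card_le_finrank_of_inner_eq_zero_s15
    (hu.comp ((↑) : T → ι) Subtype.val_injective)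
    (hv.comp ((↑) : S → ι) Subtype.val_injective) fun a b => horth a a.2 b b.2
  have hSG : S.card + G.card = Fintype.card ι := by
    simpa [S, G, not_le] using card_filter_add_card_filter_not (s := univ) (fun q => μ q ≤ μ j)
  rw [Fintype.card_coe, Fintype.card_coe, card_insert_of_notMem (by simp [G])] at hle
  omega

end Orthogonal

theorem inner_add_smul_apply_add_smul {𝕜 K : Type*} [RCLike 𝕜] [NormedAddCommGroup K]
    [InnerProductSpace 𝕜 K] (T : K →L[𝕜] K) (x y : K) (z : 𝕜) :
    ⟪x + z • y, T (x + z • y)⟫_𝕜 =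
      ⟪x, T x⟫_𝕜 + z * ⟪x, T y⟫_𝕜 + conj z * ⟪y, T x⟫_𝕜 + z * conj z * ⟪y, T y⟫_𝕜 := by
  simp only [map_add, map_smul, inner_add_left, inner_add_right, inner_smul_left,
    inner_smul_right]
  ring

theorem stmt_15_general {K : Type*}
    [NormedAddCommGroup K] [InnerProductSpace ℂ K] [FiniteDimensional ℂ K]
    (σ₀ : ℝ) (P : ℂ → (K →L[ℂ] K))
    (hsa : ∀ᶠ σ : ℂ in nhds (σ₀ : ℂ),
      ContinuousLinearMap.adjoint (P ((starRingEnd ℂ) σ)) = P σ)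
    (hpos : ∀ᶠ σ : ℝ in nhds σ₀, σ ≠ σ₀ →
      ∀ x : K, 0 ≤ ((inner ℂ x (P (σ : ℂ) x) : ℂ)).re)
    (d : ℕ) (hd : Module.finrank ℂ K = d)
    (ψ : Fin d → ℂ → K) (β : Fin d → ℂ → K) (μ : Fin d → ℕ)
    (c : Fin d → ℕ → K) (h : Fin d → ℂ → K)
    (hμ : ∀ j, 0 < μ j)
    (hβa : ∀ j, AnalyticAt ℂ (β j) (σ₀ : ℂ))
    (hβψ : ∀ j, ∀ᶠ σ in nhdsWithin (σ₀ : ℂ) {(σ₀ : ℂ)}ᶜ, β j σ = P σ (ψ j σ))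
    (hβind : LinearIndependent ℂ (fun j => β j (σ₀ : ℂ)))
    (hha : ∀ j, AnalyticAt ℂ (h j) (σ₀ : ℂ))
    (hlaurent : ∀ j, ∀ᶠ σ in nhdsWithin (σ₀ : ℂ) {(σ₀ : ℂ)}ᶜ,
      ψ j σ = (∑ ℓ ∈ Finset.range (μ j),
        ((σ - (σ₀ : ℂ)) ^ ((ℓ : ℤ) - (μ j : ℤ))) • c j ℓ) + h j σ)
    (hcind : LinearIndependent ℂ (fun j => c j 0)) :
    ∀ j, Even (μ j) := by
  intro j
  by_contra hodd
  set A : Fin d → Fin d → ℝ → ℂ := fun p q σ => ⟪ψ p σ, P σ (ψ q σ)⟫_ℂ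
  have hsymm : ∀ p q, ∀ᶠ σ in 𝓝[≠] σ₀, A p q σ = conj (A q p σ) := fun p q =>
    ((eventually_isSelfAdjoint_ofReal hsa).filter_mono nhdsWithin_le_nhds).mono fun σ hσ => by
      rw [inner_conj_symm]
      exact (hσ.isSymmetric _ _).symm
  have hposA : ∀ p q (z : ℂ), ∀ᶠ σ in 𝓝[≠] σ₀,
      0 ≤ (A p p σ + z * A p q σ + conj z * A q p σ + z * conj z * A q q σ).re := by
    intro p q z
    filter_upwards [hpos.filter_mono nhdsWithin_le_nhds, self_mem_nhdsWithin] with σ hσ hne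
    simpa only [inner_add_smul_apply_add_smul] using hσ hne (ψ p σ + z • ψ q σ)
  have hlim : ∀ p q, Tendsto (fun σ => ((σ - σ₀ : ℝ) : ℂ) ^ μ p * A p q σ) (𝓝[≠] σ₀)
      (𝓝 ⟪c p 0, β q σ₀⟫_ℂ) := fun p q =>
    (tendsto_sub_pow_mul_inner_of_eventuallyEq_laurent (hμ p) (hha p).continuousAt (hlaurent p)
      (hβa q).continuousAt).congr' <|
        ((tendsto_ofReal_nhdsNE σ₀).eventually (hβψ q)).mono fun σ hσ => by rw [hσ]
  obtain ⟨k, hk, hne⟩ := exists_eq_and_inner_ne_zero_of_triangular hcind hβind (by simp [hd]) μ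
    (fun p q hqp => scaledLimit_eq_zero_of_lt hsymm hlim hqp) j
  exact hne (scaledLimit_eq_zero_of_odd hsymm hposA hlim hk.symm
    (Nat.not_even_iff_odd.mp hodd))

/-- Evenness of partial multiplicities for a selfadjoint positive holomorphic family
(Lemma EvenPowers): if `P(σ) : K → K` is holomorphic near the real point `σ₀`,
selfadjoint (`P(σ̄)* = P(σ)`), nonnegative for real `σ ≠ σ₀` near `σ₀`, with
`P(σ₀) = 0` and invertible for `σ ≠ σ₀`, then for any system `ψ₁,…,ψ_d` as in the
structure theorem the pole orders `μ_j` are all even. -/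
theorem stmt_15 {K : Type*}
    [NormedAddCommGroup K] [InnerProductSpace ℂ K] [FiniteDimensional ℂ K]
    (σ₀ : ℝ) (P : ℂ → (K →L[ℂ] K)) (hP : AnalyticAt ℂ P (σ₀ : ℂ))
    (hsa : ∀ᶠ σ : ℂ in nhds (σ₀ : ℂ),
      ContinuousLinearMap.adjoint (P ((starRingEnd ℂ) σ)) = P σ)
    (hpos : ∀ᶠ σ : ℝ in nhds σ₀, σ ≠ σ₀ →
      ∀ x : K, 0 ≤ ((inner ℂ x (P (σ : ℂ) x) : ℂ)).re)
    (hzero : P (σ₀ : ℂ) = 0)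
    (hinv : ∀ᶠ σ in nhdsWithin (σ₀ : ℂ) {(σ₀ : ℂ)}ᶜ, Function.Bijective (P σ))
    (d : ℕ) (hd : Module.finrank ℂ K = d)
    (ψ : Fin d → ℂ → K) (β : Fin d → ℂ → K) (μ : Fin d → ℕ)
    (c : Fin d → ℕ → K) (h : Fin d → ℂ → K)
    (hμ : ∀ j, 0 < μ j)
    (hβa : ∀ j, AnalyticAt ℂ (β j) (σ₀ : ℂ))
    (hβψ : ∀ j, ∀ᶠ σ in nhdsWithin (σ₀ : ℂ) {(σ₀ : ℂ)}ᶜ, β j σ = P σ (ψ j σ))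
    (hβind : LinearIndependent ℂ (fun j => β j (σ₀ : ℂ)))
    (hha : ∀ j, AnalyticAt ℂ (h j) (σ₀ : ℂ))
    (hlaurent : ∀ j, ∀ᶠ σ in nhdsWithin (σ₀ : ℂ) {(σ₀ : ℂ)}ᶜ,
      ψ j σ = (∑ ℓ ∈ Finset.range (μ j),
        ((σ - (σ₀ : ℂ)) ^ ((ℓ : ℤ) - (μ j : ℤ))) • c j ℓ) + h j σ)
    (hcind : LinearIndependent ℂ (fun j => c j 0)) :
    ∀ j, Even (μ j) :=
  stmt_15_general σ₀ P hsa hpos d hd ψ β μ c h hμ hβa hβψ hβind hha hlaurent hcind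
end

section
/- Let u = u₊ x^{ib} + u₋ x^{−ib} and v = v₊ x^{ib} + v₋ x^{−ib} with b > 0 and complex coefficients, with Mellin transforms û(σ) = u₊Φ(σ−b)/(σ−b) + u₋Φ(σ+b)/(σ+b) (Φ entire with Φ(±b-shift values) normalized so Φ(0)conj(Φ(0)) = 1). Then for γ a positively oriented simple closed curve around both b and −b, (1/2π) ∮_γ (σ² − b²) û(σ) conj(v̂(σ̄)) dσ = 2bi (u₊ conj(v₊) − u₋ conj(v₋)). Consequently, such a u satisfies the vanishing [u,u] = 0 if and only if |u₊| = |u₋|. -/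
open Complex ComplexConjugate Metric

/-!
On the circle the integrand splits as `(σ - b)⁻¹ A(σ) + (σ + b)⁻¹ B(σ) + E(σ)` with `A`, `B`, `E`
entire: in every product of a pole of `û` with a pole of `conj v̂(σ̄)` the factor `σ² - b²` leaves
at most a simple pole. Cauchy's formula gives `2πi (A(b) + B(-b))`, and
`Φ(0) conj Φ(0) = 1` reduces this to `2πi · 2b (u₊ conj v₊ - u₋ conj v₋)`.
For `u = v` the bracket is `|u₊|² - |u₋|²`.
-/

/-- The Mellin transform `û(σ) = u₊Φ(σ - b)/(σ - b) + u₋Φ(σ + b)/(σ + b)` of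
`u = u₊ x^{ib} + u₋ x^{-ib}`. -/
noncomputable def mellinTwoPole (Φ : ℂ → ℂ) (b : ℝ) (uP uM σ : ℂ) : ℂ :=
  uP * (Φ (σ - b) / (σ - b)) + uM * (Φ (σ + b) / (σ + b))

lemma conj_mellinTwoPole_conj (Φ : ℂ → ℂ) (b : ℝ) (vP vM σ : ℂ) :
    conj (mellinTwoPole Φ b vP vM (conj σ)) =
      mellinTwoPole (conj ∘ Φ ∘ conj) b (conj vP) (conj vM) σ := by
  simp [mellinTwoPole]

lemma circleIntegrable_sub_inv_mul {A : ℂ → ℂ} (hA : Continuous A) {c a : ℂ} {R : ℝ}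
    (ha : a ∈ ball c R) : CircleIntegrable (fun z => (z - a)⁻¹ * A z) c R := by
  refine ContinuousOn.circleIntegrable (dist_nonneg.trans (mem_ball.mp ha).le) ?_
  refine (ContinuousOn.inv₀ (by fun_prop) fun z hz => sub_ne_zero.mpr ?_).mul hA.continuousOn
  rintro rfl
  exact sphere_disjoint_ball.ne_of_mem hz ha rfl

lemma circleIntegral_sub_inv_mul_add_sub_inv_mul_add {A B E : ℂ → ℂ} (hA : Differentiable ℂ A)
    (hB : Differentiable ℂ B) (hE : Differentiable ℂ E) {c a a' : ℂ} {R : ℝ}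
    (ha : a ∈ ball c R) (ha' : a' ∈ ball c R) :
    (∮ z in C(c, R), ((z - a)⁻¹ * A z + (z - a')⁻¹ * B z + E z)) =
      2 * Real.pi * I * (A a + B a') := by
  have hR : 0 ≤ R := dist_nonneg.trans (mem_ball.mp ha).le
  have hiA := circleIntegrable_sub_inv_mul hA.continuous ha
  have hiB := circleIntegrable_sub_inv_mul hB.continuous ha'
  have hiE : CircleIntegrable E c R := hE.continuous.continuousOn.circleIntegrable hR
  rw [circleIntegral.integral_add (f := fun z => (z - a)⁻¹ * A z + (z - a')⁻¹ * B z)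
      (hiA.add hiB) hiE, circleIntegral.integral_add hiA hiB]
  have hIA := (hA.diffContOnCl (s := ball c R)).circleIntegral_sub_inv_smul ha
  have hIB := (hB.diffContOnCl (s := ball c R)).circleIntegral_sub_inv_smul ha'
  have hIE : (∮ z in C(c, R), E z) = 0 :=
    circleIntegral_eq_zero_of_differentiable_on_off_countable hR Set.countable_empty
      hE.continuous.continuousOn fun z _ => hE z
  simp only [smul_eq_mul] at hIA hIB
  rw [hIA, hIB, hIE]
  ring

lemma sq_sub_sq_mul_mellinTwoPole_mul_mellinTwoPole (Φ Ψ : ℂ → ℂ) (b : ℝ)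
    (uP uM vP vM : ℂ) {σ : ℂ} (hm : σ - b ≠ 0) (hp : σ + b ≠ 0) :
    (σ ^ 2 - (b : ℂ) ^ 2) * mellinTwoPole Φ b uP uM σ * mellinTwoPole Ψ b vP vM σ =
      (σ - b)⁻¹ * (uP * vP * ((σ + b) * (Φ (σ - b) * Ψ (σ - b)))) +
        (σ - -(b : ℂ))⁻¹ * (uM * vM * ((σ - b) * (Φ (σ + b) * Ψ (σ + b)))) +
        (uP * vM * (Φ (σ - b) * Ψ (σ + b)) + uM * vP * (Φ (σ + b) * Ψ (σ - b))) := by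
  rw [sub_neg_eq_add, mellinTwoPole, mellinTwoPole]
  field_simp
  ring

theorem mellinTwoPole_pairing {Φ : ℂ → ℂ} (hΦ : Differentiable ℂ Φ)
    (hnorm : Φ 0 * conj (Φ 0) = 1) {b : ℝ} (hb : 0 < b) (uP uM vP vM : ℂ) {ρ : ℝ}
    (hρ : b < ρ) :
    (1 / (2 * Real.pi) : ℂ) * (∮ σ in C(0, ρ), (σ ^ 2 - (b : ℂ) ^ 2) *
        mellinTwoPole Φ b uP uM σ * conj (mellinTwoPole Φ b vP vM (conj σ))) =
      2 * b * I * (uP * conj vP - uM * conj vM) := by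
  set Ψ : ℂ → ℂ := conj ∘ Φ ∘ conj
  have hΨ : Differentiable ℂ Ψ := fun z => differentiableAt_conj_conj_iff.mpr (hΦ _)
  have hb_mem : (b : ℂ) ∈ ball (0 : ℂ) ρ := by
    simpa [abs_of_pos hb] using hρ
  have hnegb_mem : -(b : ℂ) ∈ ball (0 : ℂ) ρ := by
    simpa [abs_of_pos hb] using hρ
  have hoff_poles : ∀ σ ∈ sphere (0 : ℂ) ρ, σ - b ≠ 0 ∧ σ + b ≠ 0 := by
    intro σ hσ
    refine ⟨sub_ne_zero.mpr ?_, fun h => ?_⟩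
    · rintro rfl
      exact sphere_disjoint_ball.ne_of_mem hσ hb_mem rfl
    · exact sphere_disjoint_ball.ne_of_mem hσ hnegb_mem (eq_neg_of_add_eq_zero_left h)
  rw [circleIntegral.integral_congr (hb.le.trans hρ.le) fun σ hσ => by
      simp only [conj_mellinTwoPole_conj]
      exact sq_sub_sq_mul_mellinTwoPole_mul_mellinTwoPole Φ Ψ b uP uM _ _
        (hoff_poles σ hσ).1 (hoff_poles σ hσ).2,
    circleIntegral_sub_inv_mul_add_sub_inv_mul_add (by fun_prop) (by fun_prop) (by fun_prop)
      hb_mem hnegb_mem]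
  have hΦΨ : Φ 0 * Ψ 0 = 1 := by simpa [Ψ] using hnorm
  simp only [sub_self, neg_add_cancel, hΦΨ]
  field_simp [Complex.ofReal_ne_zero.mpr Real.pi_ne_zero]
  ring

/-- Residue computation for the pairing at the two simple real poles `±b`: with
`û(σ) = u₊Φ(σ−b)/(σ−b) + u₋Φ(σ+b)/(σ+b)` (`Φ` entire with `Φ(0)conj(Φ(0)) = 1`) and
`γ` a positively oriented circle enclosing both `b` and `−b`, one has
`(1/2π) ∮_γ (σ²−b²) û(σ) conj(v̂(σ̄)) dσ = 2bi (u₊ conj v₊ − u₋ conj v₋)`;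
consequently `[u,u] = 0` iff `|u₊| = |u₋|`. -/
theorem stmt_18 (Φ : ℂ → ℂ) (hΦ : Differentiable ℂ Φ)
    (hnorm : Φ 0 * (starRingEnd ℂ) (Φ 0) = 1)
    (b : ℝ) (hb : 0 < b) (uP uM vP vM : ℂ) :
    ∀ ρ : ℝ, b < ρ →
      ((1 / (2 * Real.pi) : ℂ) *
          (∮ σ in C(0, ρ), (σ ^ 2 - (b : ℂ) ^ 2) *
            (uP * (Φ (σ - b) / (σ - b)) + uM * (Φ (σ + b) / (σ + b))) *
            (starRingEnd ℂ) (vP * (Φ ((starRingEnd ℂ) σ - b) / ((starRingEnd ℂ) σ - b)) +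
              vM * (Φ ((starRingEnd ℂ) σ + b) / ((starRingEnd ℂ) σ + b)))) =
        2 * (b : ℂ) * Complex.I * (uP * (starRingEnd ℂ) vP - uM * (starRingEnd ℂ) vM)) ∧
      (((1 / (2 * Real.pi) : ℂ) *
          (∮ σ in C(0, ρ), (σ ^ 2 - (b : ℂ) ^ 2) *
            (uP * (Φ (σ - b) / (σ - b)) + uM * (Φ (σ + b) / (σ + b))) *
            (starRingEnd ℂ) (uP * (Φ ((starRingEnd ℂ) σ - b) / ((starRingEnd ℂ) σ - b)) +
              uM * (Φ ((starRingEnd ℂ) σ + b) / ((starRingEnd ℂ) σ + b)))) = 0)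
        ↔ ‖uP‖ = ‖uM‖) := by
  intro ρ hρ
  refine ⟨mellinTwoPole_pairing hΦ hnorm hb uP uM vP vM hρ, ?_⟩
  have huu := mellinTwoPole_pairing hΦ hnorm hb uP uM uP uM hρ
  simp only [mellinTwoPole] at huu
  rw [huu]
  have h2bI : 2 * (b : ℂ) * I ≠ 0 := by simp [hb.ne', I_ne_zero]
  rw [mul_eq_zero, or_iff_right h2bI, sub_eq_zero, mul_conj, mul_conj, ofReal_inj,
    normSq_eq_norm_sq, normSq_eq_norm_sq]
  exact sq_eq_sq₀ (norm_nonneg _) (norm_nonneg _)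
end

section
/- Let H₁ ↪ H be Hilbert spaces with H₁ continuously embedded in H, let A : D ⊆ H → H be a closed operator whose domain D (with graph norm) embeds compactly into H, and suppose there is a bounded operator Q : H → H₁ and a bounded operator R : H₁ → H₁ with Q∘A = I + R on D ∩ H₁, where I + R : H₁ → H₁ is Fredholm. If (u_n) ⊆ D ∩ H₁ with u_n → u in H and Au_n → f in H, then u ∈ H₁ and Au = f; i.e., A restricted to D ∩ H₁ is closed as an operator in H. -/
/-!
Closedness of `A` gives `u ∈ D` and `A u = f`. For `u ∈ H₁`, put `T = 1 + R`: then
`T w_n = Q A u_n → Q f`. Since `T` has closed range, the open mapping theorem for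
`T : H₁ → range T` lets one subtract elements `k_n ∈ ker T` from `w_n` so that `w_n - k_n`
converges in `H₁`. Then `J k_n` converges in `H`, and its limit lies in the image under `J` of
the finite-dimensional, hence closed, space `ker T`.
-/

open Filter Topology

theorem LinearPMap.IsClosed.exists_mem_domain_apply_eq_of_tendsto {R E F : Type*} [CommRing R]
    [AddCommGroup E] [Module R E] [TopologicalSpace E]
    [AddCommGroup F] [Module R F] [TopologicalSpace F]
    {A : E →ₗ.[R] F} (hA : A.IsClosed)
    {ι : Type*} {l : Filter ι} [l.NeBot] {x : ι → A.domain} {u : E} {f : F}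
    (hx : Tendsto (fun i => (x i : E)) l (𝓝 u)) (hAx : Tendsto (fun i => A (x i)) l (𝓝 f)) :
    ∃ hu : u ∈ A.domain, A ⟨u, hu⟩ = f := by
  obtain ⟨y, hyu, hyf⟩ := A.mem_graph_iff.mp <|
    hA.mem_of_tendsto (hx.prodMk_nhds hAx) (Eventually.of_forall fun i => A.mem_graph (x i))
  obtain rfl : (y : E) = u := hyu
  exact ⟨y.2, hyf⟩

namespace ContinuousLinearMap

variable {𝕜 E F G : Type*} [NontriviallyNormedField 𝕜]
  [NormedAddCommGroup E] [NormedSpace 𝕜 E] [CompleteSpace E]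
  [NormedAddCommGroup F] [NormedSpace 𝕜 F] [CompleteSpace F]
  {ι : Type*} {l : Filter ι} [l.NeBot]

theorem exists_tendsto_sub_ker_of_tendsto_apply (T : E →L[𝕜] F)
    (hT : IsClosed (LinearMap.range (T : E →ₗ[𝕜] F) : Set F)) {w : ι → E} {y : F}
    (hw : Tendsto (fun i => T (w i)) l (𝓝 y)) :
    ∃ x₀ : E, ∃ k : ι → E, (∀ i, k i ∈ LinearMap.ker (T : E →ₗ[𝕜] F)) ∧
      Tendsto (fun i => w i - k i) l (𝓝 x₀) := by
  obtain ⟨x₀, rfl⟩ : y ∈ LinearMap.range (T : E →ₗ[𝕜] F) :=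
    hT.mem_of_tendsto hw (Eventually.of_forall fun i => ⟨w i, rfl⟩)
  have : CompleteSpace (LinearMap.range (T : E →ₗ[𝕜] F)) := hT.completeSpace_coe
  let S := T.codRestrict (LinearMap.range (T : E →ₗ[𝕜] F)) fun x => ⟨x, rfl⟩
  have hS : Function.Surjective S := fun ⟨_, x, hx⟩ => ⟨x, Subtype.ext hx⟩
  obtain ⟨C, -, hC⟩ := S.exists_preimage_norm_le hS
  choose e he hCe using fun i => hC (S (w i - x₀))
  refine ⟨x₀, fun i => w i - x₀ - e i, fun i => ?_, ?_⟩
  · have hTe : T (e i) = T (w i - x₀) := congrArg Subtype.val (he i)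
    rw [LinearMap.mem_ker, ContinuousLinearMap.coe_coe, map_sub, hTe, sub_self]
  · have he0 : Tendsto e l (𝓝 0) := by
      have hSn : ∀ i, ‖S (w i - x₀)‖ = ‖T (w i) - T x₀‖ := fun i => by rw [← map_sub]; rfl
      refine squeeze_zero_norm (fun i => (hCe i).trans_eq (congrArg (C * ·) (hSn i))) ?_
      simpa using (tendsto_sub_nhds_zero_iff.mpr hw).norm.const_mul C
    have hlim := he0.const_add x₀
    rw [add_zero] at hlim
    exact hlim.congr fun i => by beta_reduce; abel

variable [CompleteSpace 𝕜] [NormedAddCommGroup G] [NormedSpace 𝕜 G]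

theorem mem_range_of_tendsto_of_finiteDimensional_ker (T : E →L[𝕜] F)
    (hT : IsClosed (LinearMap.range (T : E →ₗ[𝕜] F) : Set F))
    [FiniteDimensional 𝕜 (LinearMap.ker (T : E →ₗ[𝕜] F))] (J : E →L[𝕜] G)
    {w : ι → E} {y : F} {z : G} (hTw : Tendsto (fun i => T (w i)) l (𝓝 y))
    (hJw : Tendsto (fun i => J (w i)) l (𝓝 z)) :
    z ∈ LinearMap.range (J : E →ₗ[𝕜] G) := by
  obtain ⟨x₀, k, hk, hconv⟩ := T.exists_tendsto_sub_ker_of_tendsto_apply hT hTw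
  have hJk : Tendsto (fun i => J (k i)) l (𝓝 (z - J x₀)) := by
    simpa using hJw.sub ((J.continuous.tendsto x₀).comp hconv)
  obtain ⟨k₀, -, hk₀⟩ := ((LinearMap.ker (T : E →ₗ[𝕜] F)).map (J : E →ₗ[𝕜] G)
    ).closed_of_finiteDimensional.mem_of_tendsto hJk
    (Eventually.of_forall fun i => ⟨k i, hk i, rfl⟩)
  refine ⟨x₀ + k₀, ?_⟩
  rw [map_add, hk₀]
  exact add_sub_cancel _ _

end ContinuousLinearMap

theorem stmt_19_general {H H₁ : Type*}
    [NormedAddCommGroup H] [InnerProductSpace ℂ H] [CompleteSpace H]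
    [NormedAddCommGroup H₁] [InnerProductSpace ℂ H₁] [CompleteSpace H₁]
    (J : H₁ →L[ℂ] H)
    (A : H →ₗ.[ℂ] H) (hAclosed : IsClosed (A.graph : Set (H × H)))
    (Q : H →L[ℂ] H₁) (R : H₁ →L[ℂ] H₁)
    [FiniteDimensional ℂ (LinearMap.ker (((1 : H₁ →L[ℂ] H₁) + R : H₁ →L[ℂ] H₁) : H₁ →ₗ[ℂ] H₁))]
    (hrange : IsClosed (LinearMap.range (((1 : H₁ →L[ℂ] H₁) + R : H₁ →L[ℂ] H₁) : H₁ →ₗ[ℂ] H₁) : Set H₁))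
    (hQA : ∀ (x : A.domain) (w : H₁), J w = (x : H) → Q (A x) = w + R w)
    (un : ℕ → A.domain) (wn : ℕ → H₁) (hw : ∀ n, J (wn n) = (un n : H))
    (u f : H)
    (hu : Filter.Tendsto (fun n => ((un n : H))) Filter.atTop (nhds u))
    (hf : Filter.Tendsto (fun n => A (un n)) Filter.atTop (nhds f)) :
    ∃ (hud : u ∈ A.domain) (w : H₁), J w = u ∧ A ⟨u, hud⟩ = f := by
  obtain ⟨hud, hAu⟩ := LinearPMap.IsClosed.exists_mem_domain_apply_eq_of_tendsto hAclosed hu hf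
  have hTw : Tendsto (fun n => (1 + R) (wn n)) atTop (𝓝 (Q f)) := by
    have hTQ : ∀ n, (1 + R) (wn n) = Q (A (un n)) := fun n => (hQA (un n) (wn n) (hw n)).symm
    simpa only [hTQ, Function.comp_def] using (Q.continuous.tendsto f).comp hf
  obtain ⟨w, hJw⟩ := (1 + R).mem_range_of_tendsto_of_finiteDimensional_ker hrange J hTw
    (by simpa only [hw] using hu)
  exact ⟨hud, w, hJw, hAu⟩

/-- Abstract version of the closedness lemma: `H₁ ↪ H` continuously embedded Hilbert
spaces, `A` a closed operator whose domain embeds compactly into `H` (in the graph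
norm), `Q : H → H₁` and `R : H₁ → H₁` bounded with `Q ∘ A = I + R` on `D ∩ H₁` and
`I + R : H₁ → H₁` Fredholm.  If `(u_n) ⊆ D ∩ H₁`, `u_n → u` in `H` and `A u_n → f` in
`H`, then `u ∈ H₁`, `u ∈ D` and `Au = f`; i.e. `A` restricted to `D ∩ H₁` is closed. -/
theorem stmt_19 {H H₁ : Type*}
    [NormedAddCommGroup H] [InnerProductSpace ℂ H] [CompleteSpace H]
    [NormedAddCommGroup H₁] [InnerProductSpace ℂ H₁] [CompleteSpace H₁]
    (J : H₁ →L[ℂ] H) (hJinj : Function.Injective J)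
    (A : H →ₗ.[ℂ] H) (hAclosed : IsClosed (A.graph : Set (H × H)))
    (hcpt : ∀ u : ℕ → A.domain, (∃ C : ℝ, ∀ n, ‖(u n : H)‖ + ‖A (u n)‖ ≤ C) →
      ∃ φ : ℕ → ℕ, StrictMono φ ∧ ∃ x : H,
        Filter.Tendsto (fun n => ((u (φ n) : H))) Filter.atTop (nhds x))
    (Q : H →L[ℂ] H₁) (R : H₁ →L[ℂ] H₁)
    [FiniteDimensional ℂ (LinearMap.ker (((1 : H₁ →L[ℂ] H₁) + R : H₁ →L[ℂ] H₁) : H₁ →ₗ[ℂ] H₁))]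
    [FiniteDimensional ℂ (H₁ ⧸ LinearMap.range (((1 : H₁ →L[ℂ] H₁) + R : H₁ →L[ℂ] H₁) : H₁ →ₗ[ℂ] H₁))]
    (hrange : IsClosed (LinearMap.range (((1 : H₁ →L[ℂ] H₁) + R : H₁ →L[ℂ] H₁) : H₁ →ₗ[ℂ] H₁) : Set H₁))
    (hQA : ∀ (x : A.domain) (w : H₁), J w = (x : H) → Q (A x) = w + R w)
    (un : ℕ → A.domain) (wn : ℕ → H₁) (hw : ∀ n, J (wn n) = (un n : H))
    (u f : H)
    (hu : Filter.Tendsto (fun n => ((un n : H))) Filter.atTop (nhds u))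
    (hf : Filter.Tendsto (fun n => A (un n)) Filter.atTop (nhds f)) :
    ∃ (hud : u ∈ A.domain) (w : H₁), J w = u ∧ A ⟨u, hud⟩ = f :=
  stmt_19_general J A hAclosed Q R hrange hQA un wn hw u f hu hf
end
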